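/- arXiv:2106.06956 — 10 statements merged into one kernel-verified Lean document; each statement's English description precedes it below -/
import Mathlib

section
/- Let f : ℝ → ℝ be a strictly increasing function, let L > 0 be a real number and k ≥ 1 a natural number. Suppose that (1) f(t + L/k) = f(t) + L/k for all t ∈ ℝ, and (2) the k-th iterate of f satisfies f^[k](t) = t + L for all t ∈ ℝ. Then f(t) = t + L/k for all t ∈ ℝ. -/
theorem stmt_0 (f : ℝ → ℝ) (hf : StrictMono f) (L : ℝ) (hL : 0 < L) (k : ℕ) (hk : 1 ≤ k)
    (h1 : ∀ t : ℝ, f (t + L / k) = f t + L / k)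
    (h2 : ∀ t : ℝ, f^[k] t = t + L) :
    ∀ t : ℝ, f t = t + L / k := by
  have hk0 : (k : ℝ) ≠ 0 := by exact_mod_cast Nat.one_le_iff_ne_zero.mp hk
  have hmul : ∀ n : ℕ, ∀ t : ℝ, f (t + n * (L / k)) = f t + n * (L / k) := by
    intro n
    induction n with
    | zero => simp
    | succ m ih =>
      intro t
      have : t + (m + 1 : ℕ) * (L / k) = (t + m * (L / k)) + L / k := by
        push_cast; ring
      rw [this, h1, ih]
      push_cast; ring
  have hkL : (k : ℝ) * (L / k) = L := by field_simp
  intro t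
  rcases lt_trichotomy (f t) (t + L / k) with hlt | heq | hgt
  · exfalso
    have key : ∀ n : ℕ, f^[n + 1] t < t + (n + 1 : ℕ) * (L / k) := by
      intro n
      induction n with
      | zero => simpa using hlt
      | succ m ih =>
        have h3 : f (f^[m + 1] t) < f (t + (m + 1 : ℕ) * (L / k)) := hf ih
        rw [hmul] at h3
        calc f^[m + 2] t = f (f^[m + 1] t) := Function.iterate_succ_apply' f (m+1) t
          _ < f t + (m + 1 : ℕ) * (L / k) := h3
          _ < (t + L / k) + (m + 1 : ℕ) * (L / k) := by linarith
          _ = t + (m + 2 : ℕ) * (L / k) := by push_cast; ring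
    obtain ⟨m, rfl⟩ : ∃ m, k = m + 1 := ⟨k - 1, (Nat.succ_pred_eq_of_pos hk).symm⟩
    have := key m
    rw [h2] at this
    rw [hkL] at this
    linarith
  · exact heq
  · exfalso
    have key : ∀ n : ℕ, f^[n + 1] t > t + (n + 1 : ℕ) * (L / k) := by
      intro n
      induction n with
      | zero => simpa using hgt
      | succ m ih =>
        have h3 : f (t + (m + 1 : ℕ) * (L / k)) < f (f^[m + 1] t) := hf ih
        rw [hmul] at h3
        calc f^[m + 2] t = f (f^[m + 1] t) := Function.iterate_succ_apply' f (m+1) t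
          _ > f t + (m + 1 : ℕ) * (L / k) := h3
          _ > (t + L / k) + (m + 1 : ℕ) * (L / k) := by linarith
          _ = t + (m + 2 : ℕ) * (L / k) := by push_cast; ring
    obtain ⟨m, rfl⟩ : ∃ m, k = m + 1 := ⟨k - 1, (Nat.succ_pred_eq_of_pos hk).symm⟩
    have := key m
    rw [h2] at this
    rw [hkL] at this
    linarith
end

section
/- Let P > 0 and let G : ℝ → ℝ be a C¹-smooth, P-periodic function with G(t) > 0 for all t. Then there exist a real number a > 0 and a C²-smooth, strictly increasing function f : ℝ → ℝ such that a·f'(s) = G(f(s)) for all s ∈ ℝ and f(s + P) = f(s) + P for all s ∈ ℝ. -/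
/-!
With `g = 1 / G`, the primitive `H x = ∫₀ˣ g` is strictly increasing with `H (x + P) = H x + H P`,
because `g` is positive and `P`-periodic. Rescaling, `Φ = (P / H P) • H` is an increasing bijection
of `ℝ` commuting with translation by `P`, and `Φ' = a g` with `a = P / H P`. Its inverse `f` then
satisfies `f' = 1 / Φ' ∘ f = a⁻¹ G ∘ f`, commutes with translation by `P`, and is `C²` because its
derivative is a `C¹` function of `f`.
-/

open Function MeasureTheory intervalIntegral

theorem ContDiff.of_hasDerivAt_comp {𝕜 E : Type*} [NontriviallyNormedField 𝕜]
    [NormedAddCommGroup E] [NormedSpace 𝕜 E] {F : E → E} {f : 𝕜 → E} {n : ℕ}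
    (hF : ContDiff 𝕜 n F) (hf : ∀ s, HasDerivAt f (F (f s)) s) : ContDiff 𝕜 (n + 1) f := by
  have hdiff : Differentiable 𝕜 f := fun s => (hf s).differentiableAt
  have hderiv : deriv f = F ∘ f := funext fun s => (hf s).deriv
  induction n with
  | zero =>
    exact contDiff_one_iff_deriv.2 ⟨hdiff, hderiv ▸ hF.continuous.comp hdiff.continuous⟩
  | succ n ih =>
    have hf_smooth : ContDiff 𝕜 (n + 1) f := ih (hF.of_le (by norm_cast; omega))
    refine contDiff_succ_iff_deriv.2 ⟨hdiff, by simp, ?_⟩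
    rw [hderiv]
    exact hF.comp (by exact_mod_cast hf_smooth)

theorem Equiv.symm_add_of_map_add {α β : Type*} [Add α] [Add β] (e : α ≃ β) {p : α} {c : β}
    (h : ∀ x, e (x + p) = e x + c) (y : β) : e.symm (y + c) = e.symm y + p :=
  e.symm_apply_eq.2 (by rw [h, e.apply_symm_apply])

theorem OrderIso.hasDerivAt_symm (e : ℝ ≃o ℝ) {d y : ℝ} (hd : HasDerivAt e d (e.symm y))
    (hd₀ : d ≠ 0) : HasDerivAt e.symm d⁻¹ y :=
  hd.of_local_left_inverse e.symm.continuous.continuousAt hd₀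
    (.of_forall e.apply_symm_apply)

section PositivePrimitive

variable {g : ℝ → ℝ}

theorem strictMono_intervalIntegral_of_pos (hg : Continuous g) (hpos : ∀ t, 0 < g t) (a : ℝ) :
    StrictMono fun x => ∫ t in a..x, g t := by
  intro x y hxy
  have hxy_pos := intervalIntegral_pos_of_pos (hg.intervalIntegrable (μ := volume) x y) hpos hxy
  have hsplit := integral_add_adjacent_intervals
    (hg.intervalIntegrable (μ := volume) a x) (hg.intervalIntegrable x y)
  simp only
  linarith

variable {P : ℝ}

theorem Function.Periodic.surjective_intervalIntegral_of_pos (hper : Periodic g P)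
    (hg : Continuous g) (hpos : ∀ t, 0 < g t) (hP : 0 < P) :
    Surjective fun x => ∫ t in (0 : ℝ)..x, g t :=
  (continuous_primitive hg.intervalIntegrable 0).surjective
    (hper.tendsto_atTop_intervalIntegral_of_pos' (hg.intervalIntegrable 0 P) hpos hP)
    (hper.tendsto_atBot_intervalIntegral_of_pos' (hg.intervalIntegrable 0 P) hpos hP)

theorem Function.Periodic.exists_orderIso_hasDerivAt (hper : Periodic g P) (hg : Continuous g)
    (hpos : ∀ t, 0 < g t) (hP : 0 < P) :
    ∃ (a : ℝ) (Φ : ℝ ≃o ℝ), 0 < a ∧ (∀ x, HasDerivAt Φ (a * g x) x) ∧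
      ∀ x, Φ (x + P) = Φ x + P := by
  set c := ∫ t in (0 : ℝ)..P, g t
  have hc : 0 < c := intervalIntegral_pos_of_pos (hg.intervalIntegrable 0 P) hpos hP
  have ha : 0 < P / c := div_pos hP hc
  let H : ℝ → ℝ := fun x => ∫ t in (0 : ℝ)..x, g t
  have hmono : StrictMono fun x => P / c * H x :=
    (strictMono_intervalIntegral_of_pos hg hpos 0).const_mul ha
  have hsurj : Surjective fun x => P / c * H x := fun y => by
    obtain ⟨x, hx⟩ := hper.surjective_intervalIntegral_of_pos hg hpos hP (c / P * y)
    exact ⟨x, by simp only [H, hx]; field_simp⟩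
  refine ⟨P / c, hmono.orderIsoOfSurjective _ hsurj, ha, fun x => ?_, fun x => ?_⟩
  · exact ((hg.integral_hasStrictDerivAt 0 x).hasDerivAt).const_mul (P / c)
  · have hH : H (x + P) = H x + c := by
      simpa only [zero_add] using
        hper.intervalIntegral_add_eq_add 0 x (fun t₁ t₂ => hg.intervalIntegrable t₁ t₂)
    simp only [StrictMono.coe_orderIsoOfSurjective, hH]
    field_simp

end PositivePrimitive

theorem stmt_2 (P : ℝ) (hP : 0 < P) (G : ℝ → ℝ)
    (hG : ContDiff ℝ 1 G) (hGper : ∀ t : ℝ, G (t + P) = G t)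
    (hGpos : ∀ t : ℝ, 0 < G t) :
    ∃ (a : ℝ) (f : ℝ → ℝ), 0 < a ∧ ContDiff ℝ 2 f ∧ StrictMono f ∧
      (∀ s : ℝ, a * deriv f s = G (f s)) ∧ (∀ s : ℝ, f (s + P) = f s + P) := by
  have hGinv_per : Periodic (fun t => (G t)⁻¹) P := fun t => by simp only [hGper t]
  obtain ⟨a, Φ, ha, hΦ', hΦP⟩ := hGinv_per.exists_orderIso_hasDerivAt
    (hG.continuous.inv₀ fun t => (hGpos t).ne') (fun t => inv_pos.2 (hGpos t)) hP
  have hf' : ∀ s, HasDerivAt Φ.symm (a⁻¹ * G (Φ.symm s)) s := fun s => by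
    simpa only [mul_inv, inv_inv] using
      Φ.hasDerivAt_symm (hΦ' _) (mul_ne_zero ha.ne' (inv_ne_zero (hGpos _).ne'))
  refine ⟨a, Φ.symm, ha, ?_, Φ.symm.strictMono, fun s => ?_,
    Φ.toEquiv.symm_add_of_map_add hΦP⟩
  · exact contDiff_const.mul hG |>.of_hasDerivAt_comp hf'
  · rw [(hf' s).deriv, ← mul_assoc, mul_inv_cancel₀ ha.ne', one_mul]
end

section
/- Let k ≥ 3 be a natural number and let A be an invertible 2×2 real matrix whose order in GL(2,ℝ) is exactly k (i.e. A^k = I and A^j ≠ I for 0 < j < k). Then there exist an invertible 2×2 real matrix P and a natural number m coprime to k such that P⁻¹·A·P = R_{2πm/k}, the rotation matrix by angle 2πm/k. -/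
/-!
A real eigenvalue of a matrix of finite order is a real root of unity, hence `±1`; for a `2 × 2`
matrix with real eigenvalues this forces `A ^ 2 = 1`, the Jordan block case being excluded because
a unipotent matrix of finite order is trivial in characteristic zero. So for `k ≥ 3` the
discriminant `tr A ^ 2 - 4 det A` is negative and `det A = 1`, which makes `A` conjugate to a
rotation `R_θ`. Since `θ ↦ R_θ` embeds the circle `ℝ / 2πℤ`, the angle `θ` is a point of order
exactly `k` on the circle, i.e. `θ ≡ 2πm/k` with `m` coprime to `k`.
-/

/-- The rotation matrix of the plane by angle `θ`. -/
noncomputable def rotMat (θ : ℝ) : Matrix (Fin 2) (Fin 2) ℝ :=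
  !![Real.cos θ, -Real.sin θ; Real.sin θ, Real.cos θ]

open Real Matrix

lemma rotMat_add (θ ψ : ℝ) : rotMat θ * rotMat ψ = rotMat (θ + ψ) := by
  simp only [rotMat, mul_fin_two, cos_add, sin_add]
  congr 1; ring_nf

lemma rotMat_zero : rotMat 0 = 1 := by
  simp [rotMat, one_fin_two]

lemma rotMat_pow (θ : ℝ) (n : ℕ) : rotMat θ ^ n = rotMat (n * θ) := by
  induction n with
  | zero => simp [rotMat_zero]
  | succ n ih => rw [pow_succ, ih, rotMat_add]; push_cast; ring_nf

lemma rotMat_eq_rotMat_iff {θ ψ : ℝ} : rotMat θ = rotMat ψ ↔ (θ : Angle) = ψ := by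
  constructor
  · intro h
    exact Angle.cos_sin_inj (by simpa [rotMat] using congrFun (congrFun h 0) 0)
      (by simpa [rotMat] using congrFun (congrFun h 1) 0)
  · intro h
    have hcos := congrArg Angle.cos h
    have hsin := congrArg Angle.sin h
    simp only [Angle.cos_coe, Angle.sin_coe] at hcos hsin
    simp [rotMat, hcos, hsin]

lemma orderOf_rotMat (θ : ℝ) : orderOf (rotMat θ) = addOrderOf (θ : Angle) := by
  rw [← orderOf_ofAdd_eq_addOrderOf, orderOf_eq_orderOf_iff]
  intro n
  rw [rotMat_pow, ← rotMat_zero, rotMat_eq_rotMat_iff, ← ofAdd_nsmul, ofAdd_eq_one,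
    Angle.coe_zero, ← nsmul_eq_mul, Angle.coe_nsmul]

lemma orderOf_inv_mul_mul {n R : Type*} [Fintype n] [DecidableEq n] [CommRing R]
    {P : Matrix n n R} (hP : IsUnit P) (A : Matrix n n R) : orderOf (P⁻¹ * A * P) = orderOf A := by
  obtain ⟨u, rfl⟩ := hP
  rw [orderOf_eq_orderOf_iff]
  intro j
  rw [← coe_units_inv, Units.conj_pow', mul_assoc, Units.inv_mul_eq_iff_eq_mul, mul_one,
    ← Units.eq_mul_inv_iff_mul_eq, Units.mul_inv]

lemma eq_one_of_pow_eq_one_of_sq_sub_one_eq_zero {K R : Type*} [Field K] [CharZero K] [Ring R]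
    [Algebra K R] {a : R} {k : ℕ} (hk : k ≠ 0) (ha : a ^ k = 1) (h : (a - 1) ^ 2 = 0) : a = 1 := by
  have hpow : ∀ n : ℕ, a ^ n = 1 + (n : K) • (a - 1) := by
    intro n
    induction n with
    | zero => simp
    | succ n ih =>
      have hmul : (a - 1) * a = a - 1 := by
        rw [← sub_eq_zero, ← h]; noncomm_ring
      rw [pow_succ, ih, add_mul, one_mul, smul_mul_assoc, hmul]
      push_cast
      module
  have hk' := hpow k
  rw [ha, left_eq_add, smul_eq_zero, sub_eq_zero] at hk'
  exact hk'.resolve_left (by exact_mod_cast hk)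

lemma pow_eq_one_of_det_sub_smul_one_eq_zero {n K : Type*} [Fintype n] [DecidableEq n] [Field K]
    {A : Matrix n n K} {k : ℕ} (hAk : A ^ k = 1) {c : K} (hc : (A - c • 1).det = 0) :
    c ^ k = 1 := by
  obtain ⟨v, hv0, hv⟩ := exists_mulVec_eq_zero_iff.mpr hc
  have hAv : A *ᵥ v = c • v := by
    rwa [sub_mulVec, smul_mulVec, one_mulVec, sub_eq_zero] at hv
  have hpow : ∀ m : ℕ, A ^ m *ᵥ v = c ^ m • v := by
    intro m
    induction m with
    | zero => simp
    | succ m ih => rw [pow_succ, ← mulVec_mulVec, hAv, mulVec_smul, ih, smul_smul, pow_succ']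
  have hk := hpow k
  rw [hAk, one_mulVec] at hk
  have : (c ^ k - 1) • v = 0 := by rw [sub_smul, one_smul, ← hk, sub_self]
  exact sub_eq_zero.1 ((smul_eq_zero.1 this).resolve_right hv0)

lemma sq_fin_two_eq_trace_smul_sub_det_smul {R : Type*} [CommRing R]
    (A : Matrix (Fin 2) (Fin 2) R) : A ^ 2 = A.trace • A - A.det • 1 := by
  ext i j
  fin_cases i <;> fin_cases j <;>
    simp [sq, mul_apply, det_fin_two, trace_fin_two, one_apply] <;> ring

lemma det_sub_smul_one_fin_two {R : Type*} [CommRing R] (A : Matrix (Fin 2) (Fin 2) R) (c : R) :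
    (A - c • 1).det = c ^ 2 - A.trace * c + A.det := by
  simp only [det_fin_two, trace_fin_two, Matrix.sub_apply, Matrix.smul_apply, smul_eq_mul,
    one_apply_eq, one_apply_ne zero_ne_one, one_apply_ne one_ne_zero]
  ring

lemma sq_eq_one_of_pow_eq_one_of_four_mul_det_le {A : Matrix (Fin 2) (Fin 2) ℝ} {k : ℕ}
    (hk : k ≠ 0) (hAk : A ^ k = 1) (hdisc : 4 * A.det ≤ A.trace ^ 2) : A ^ 2 = 1 := by
  have hCH := sq_fin_two_eq_trace_smul_sub_det_smul A
  set t := A.trace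
  set d := A.det
  have heig : ∀ c : ℝ, c ^ 2 - t * c + d = 0 → c ^ 2 = 1 := fun c hc ↦ by
    have hck := pow_eq_one_of_det_sub_smul_one_eq_zero hAk (by rw [det_sub_smul_one_fin_two, hc])
    refine (pow_eq_one_iff_of_nonneg (sq_nonneg c) hk).1 ?_
    rw [← pow_mul, mul_comm, pow_mul, hck, one_pow]
  obtain ⟨r, hr⟩ : ∃ r : ℝ, r ^ 2 - t * r + d = 0 :=
    ⟨(t + √(t ^ 2 - 4 * d)) / 2, by linear_combination sq_sqrt (sub_nonneg.2 hdisc) / 4⟩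
  have hr2 := heig r hr
  rcases sq_eq_sq_iff_eq_or_eq_neg.1 ((heig (t - r) (by linear_combination hr)).trans hr2.symm)
    with hs | hs
  · have ht : t = 2 * r := by linarith
    have hd : d = r ^ 2 := by linear_combination hr + r * ht
    have hrA : r • A = 1 := by
      refine eq_one_of_pow_eq_one_of_sq_sub_one_eq_zero (K := ℝ) (k := 2 * k) (by omega) ?_ ?_
      · rw [pow_mul, smul_pow, hr2, one_smul, ← pow_mul, mul_comm, pow_mul, hAk, one_pow]
      · simp only [sq, sub_mul, mul_sub, smul_mul_assoc, mul_smul_comm, one_mul, mul_one]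
        rw [← sq, hCH, ht, hd]
        linear_combination (norm := module)
          hr2 • ((2 * r) • A - (r ^ 2 + 1) • (1 : Matrix (Fin 2) (Fin 2) ℝ))
    calc A ^ 2 = (r • r • A) ^ 2 := by rw [smul_smul, ← sq, hr2, one_smul]
      _ = 1 := by rw [hrA, smul_pow, one_pow, hr2, one_smul]
  · have ht : t = 0 := by linarith
    have hd : d = -1 := by linear_combination hr - hr2 + r * ht
    rw [hCH, ht, hd]
    module

/-- The columns of the conjugating matrix are `e₁` and `(A e₁ - cos θ • e₁) / sin θ`. -/
lemma mul_eq_mul_rotMat {A : Matrix (Fin 2) (Fin 2) ℝ} {θ : ℝ} (hdet : A.det = 1)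
    (hcos : 2 * cos θ = A.trace) (hsin : sin θ ≠ 0) :
    A * !![1, (A 0 0 - cos θ) / sin θ; 0, A 1 0 / sin θ] =
      !![1, (A 0 0 - cos θ) / sin θ; 0, A 1 0 / sin θ] * rotMat θ := by
  rw [det_fin_two] at hdet
  rw [trace_fin_two] at hcos
  rw [eta_fin_two A, rotMat]
  simp only [mul_fin_two, of_apply, cons_val', cons_val_zero, cons_val_one, empty_val',
    cons_val_fin_one]
  ext i j
  fin_cases i <;> fin_cases j <;>
    simp only [Fin.isValue, Fin.zero_eta, Fin.mk_one, of_apply, cons_val', cons_val_zero,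
      cons_val_one, cons_val_fin_one, mul_one, mul_zero, add_zero, one_mul, mul_neg, zero_mul,
      zero_add, neg_zero] <;>
    field_simp
  · ring
  · linear_combination -hdet + sin_sq_add_cos_sq θ - A 0 0 * hcos
  · linear_combination -A 1 0 * hcos

lemma exists_conj_eq_rotMat {A : Matrix (Fin 2) (Fin 2) ℝ} (hdet : A.det = 1)
    (htr : A.trace ^ 2 < 4) :
    ∃ (P : Matrix (Fin 2) (Fin 2) ℝ) (θ : ℝ), IsUnit P ∧ P⁻¹ * A * P = rotMat θ := by
  set θ := arccos (A.trace / 2)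
  have hcos : 2 * cos θ = A.trace := by
    rw [cos_arccos] <;> nlinarith
  have hsin : 0 < sin θ := by
    rw [sin_arccos]; apply sqrt_pos.2; nlinarith
  have hc : A 1 0 ≠ 0 := by
    intro h
    rw [det_fin_two, h] at hdet
    rw [trace_fin_two] at htr
    nlinarith [sq_nonneg (A 0 0 - A 1 1)]
  set P := !![1, (A 0 0 - cos θ) / sin θ; 0, A 1 0 / sin θ]
  have hP : IsUnit P.det := by
    rw [det_fin_two_of, isUnit_iff_ne_zero]
    simp only [one_mul, mul_zero, sub_zero]
    exact div_ne_zero hc hsin.ne'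
  refine ⟨P, θ, (isUnit_iff_isUnit_det P).2 hP, ?_⟩
  rw [mul_assoc, mul_eq_mul_rotMat hdet hcos hsin.ne', ← mul_assoc, nonsing_inv_mul P hP, one_mul]

theorem stmt_3_general (k : ℕ) (hk : 3 ≤ k) (A : Matrix (Fin 2) (Fin 2) ℝ)
    (hAk : A ^ k = 1) (hAj : ∀ j : ℕ, 0 < j → j < k → A ^ j ≠ 1) :
    ∃ (P : Matrix (Fin 2) (Fin 2) ℝ) (m : ℕ), IsUnit P ∧ Nat.Coprime m k ∧
      P⁻¹ * A * P = rotMat (2 * Real.pi * m / k) := by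
  have hk0 : k ≠ 0 := by omega
  have hdisc : A.trace ^ 2 < 4 * A.det := by
    by_contra! h
    exact hAj 2 two_pos (by omega) (sq_eq_one_of_pow_eq_one_of_four_mul_det_le hk0 hAk h)
  have hdet : A.det = 1 :=
    (pow_eq_one_iff_of_nonneg (by nlinarith) hk0).1 (by rw [← det_pow, hAk, det_one])
  obtain ⟨P, θ, hP, hconj⟩ := exists_conj_eq_rotMat hdet (by linarith)
  have hord : addOrderOf (θ : Angle) = k := by
    rw [← orderOf_rotMat, ← hconj, orderOf_inv_mul_mul hP, orderOf_eq_iff (by omega)]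
    exact ⟨hAk, fun j hjk hj ↦ hAj j hj hjk⟩
  have : Fact (0 < 2 * π) := ⟨two_pi_pos⟩
  obtain ⟨m, -, hmk, hm⟩ := (AddCircle.addOrderOf_eq_pos_iff (by omega)).1 hord
  refine ⟨P, m, hP, hmk, ?_⟩
  rw [hconj, rotMat_eq_rotMat_iff, ← hm]
  congr 1
  ring

theorem stmt_3 (k : ℕ) (hk : 3 ≤ k) (A : Matrix (Fin 2) (Fin 2) ℝ)
    (hA : IsUnit A) (hAk : A ^ k = 1) (hAj : ∀ j : ℕ, 0 < j → j < k → A ^ j ≠ 1) :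
    ∃ (P : Matrix (Fin 2) (Fin 2) ℝ) (m : ℕ), IsUnit P ∧ Nat.Coprime m k ∧
      P⁻¹ * A * P = rotMat (2 * Real.pi * m / k) :=
  stmt_3_general k hk A hAk hAj
end

section
/- Let A and B be invertible 2×2 real matrices of finite order with A·B = B·A, and suppose the order of A is at least 3. Then there exists an invertible 2×2 real matrix P and angles θ, φ ∈ ℝ such that P⁻¹·A·P = R_θ and P⁻¹·B·P = R_φ; that is, A and B are simultaneously conjugate to rotations. -/
open Matrix Polynomial

theorem Commute.units_inv_conj {M : Type*} [Monoid M] {a b : M} (h : Commute a b) (u : Mˣ) :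
    Commute (↑u⁻¹ * a * u) (↑u⁻¹ * b * u) := by
  simp only [Commute, SemiconjBy, mul_assoc, Units.mul_inv_cancel_left]
  rw [← mul_assoc a, h.eq, mul_assoc]

theorem one_add_pow_of_sq_eq_zero {R : Type*} [Semiring R] {a : R} (ha : a ^ 2 = 0) (n : ℕ) :
    (1 + a) ^ n = 1 + n • a := by
  induction n with
  | zero => simp
  | succ n ih =>
    rw [pow_succ, ih, succ_nsmul]
    simp only [mul_add, add_mul, one_mul, mul_one, nsmul_eq_mul, mul_assoc, ← sq, ha, mul_zero]
    abel

theorem eq_one_of_pow_eq_one_of_sq_sub_one_eq_zero_s4 {R : Type*} [Ring R] [Module ℚ R] {a : R}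
    {n : ℕ} (hn : n ≠ 0) (ha : a ^ n = 1) (hu : (a - 1) ^ 2 = 0) : a = 1 := by
  have h : (n : ℚ) • (a - 1) = 0 := by
    rw [Nat.cast_smul_eq_nsmul, ← add_eq_left (a := 1), ← one_add_pow_of_sq_eq_zero hu,
      add_sub_cancel, ha]
  rw [smul_eq_zero, Nat.cast_eq_zero] at h
  exact sub_eq_zero.mp (h.resolve_left hn)

theorem sq_eq_one_of_mem_spectrum_of_pow_eq_one {𝕜 A : Type*} [Field 𝕜] [LinearOrder 𝕜]
    [IsStrictOrderedRing 𝕜] [Ring A] [Algebra 𝕜 A] [Nontrivial A] {a : A} {n : ℕ} (hn : n ≠ 0)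
    (ha : a ^ n = 1) {r : 𝕜} (hr : r ∈ spectrum 𝕜 a) : r ^ 2 = 1 := by
  have hrn : r ^ n = 1 := by simpa [ha, spectrum.one_eq] using spectrum.pow_mem_pow a n hr
  have habs : |r| = 1 :=
    (pow_eq_one_iff_of_nonneg (abs_nonneg r) hn).mp (by rw [← abs_pow, hrn, abs_one])
  rw [← sq_abs, habs, one_pow]

namespace Matrix

theorem exists_charpoly_eq_mul_of_four_mul_det_le (A : Matrix (Fin 2) (Fin 2) ℝ)
    (h : 4 * A.det ≤ A.trace ^ 2) :
    ∃ l m : ℝ, A.charpoly = (X - C l) * (X - C m) := by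
  set s := √(A.trace ^ 2 - 4 * A.det)
  have hs : s ^ 2 = A.trace ^ 2 - 4 * A.det := Real.sq_sqrt (by linarith)
  refine ⟨(A.trace + s) / 2, (A.trace - s) / 2, ?_⟩
  have hsum : A.trace = (A.trace + s) / 2 + (A.trace - s) / 2 := by ring
  have hprod : A.det = (A.trace + s) / 2 * ((A.trace - s) / 2) := by linear_combination hs / 4
  rw [charpoly_fin_two]
  conv_lhs => rw [hsum, hprod]
  simp only [C_add, C_mul]
  ring

theorem sq_trace_lt_four_mul_det_of_pow_eq_one {A : Matrix (Fin 2) (Fin 2) ℝ} {n : ℕ}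
    (hn : n ≠ 0) (hA : A ^ n = 1) (hA2 : A ^ 2 ≠ 1) : A.trace ^ 2 < 4 * A.det := by
  by_contra! h
  obtain ⟨l, m, hchar⟩ := A.exists_charpoly_eq_mul_of_four_mul_det_le h
  have hl : l ^ 2 = 1 := sq_eq_one_of_mem_spectrum_of_pow_eq_one hn hA <|
    mem_spectrum_of_isRoot_charpoly (by simp [hchar])
  have hm : m ^ 2 = 1 := sq_eq_one_of_mem_spectrum_of_pow_eq_one hn hA <|
    mem_spectrum_of_isRoot_charpoly (by simp [hchar])
  -- both roots are `±1`, so the characteristic polynomial divides `(X ^ 2 - 1) ^ 2`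
  have hdvd : ((X ^ 2 - 1) ^ 2 : ℝ[X]) = A.charpoly * ((X + C l) * (X + C m)) := by
    calc ((X ^ 2 - 1) ^ 2 : ℝ[X]) = (X ^ 2 - C (l ^ 2)) * (X ^ 2 - C (m ^ 2)) := by
          rw [hl, hm, C_1, sq]
      _ = _ := by rw [hchar, C_pow, C_pow]; ring
  have hA2n : (A ^ 2) ^ n = 1 := by rw [← pow_mul', pow_mul, hA, one_pow]
  refine hA2 (eq_one_of_pow_eq_one_of_sq_sub_one_eq_zero_s4 hn hA2n ?_)
  simpa [aeval_self_charpoly] using congrArg (aeval A) hdvd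

theorem det_eq_one_of_pow_eq_one {A : Matrix (Fin 2) (Fin 2) ℝ} {n : ℕ}
    (hn : n ≠ 0) (hA : A ^ n = 1) (hA2 : A ^ 2 ≠ 1) : A.det = 1 := by
  have hpos : 0 < A.det := by
    nlinarith [sq_trace_lt_four_mul_det_of_pow_eq_one hn hA hA2, sq_nonneg A.trace]
  exact (pow_eq_one_iff_of_nonneg hpos.le hn).mp (by rw [← det_pow, hA, det_one])

end Matrix

theorem exists_conj_eq_rotMat_of_det_eq_one {A : Matrix (Fin 2) (Fin 2) ℝ} (hdet : A.det = 1)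
    (htr : A.trace ^ 2 < 4) :
    ∃ (P : Matrix (Fin 2) (Fin 2) ℝ) (θ : ℝ),
      IsUnit P ∧ Real.sin θ ≠ 0 ∧ P⁻¹ * A * P = rotMat θ := by
  rw [trace_fin_two] at htr
  rw [det_fin_two] at hdet
  obtain ⟨c, hc⟩ : ∃ c, c = (A 0 0 + A 1 1) / 2 := ⟨_, rfl⟩
  have hc1 : c ^ 2 < 1 := by rw [hc]; nlinarith
  have hcos : Real.cos (Real.arccos c) = c := Real.cos_arccos (by nlinarith) (by nlinarith)
  obtain ⟨s, hsin⟩ : ∃ s, Real.sin (Real.arccos c) = s := ⟨_, rfl⟩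
  have hs : 0 < s := by rw [← hsin, Real.sin_arccos]; exact Real.sqrt_pos.mpr (by linarith)
  have hs2 : s ^ 2 = 1 - c ^ 2 := by rw [← hsin, Real.sin_sq, hcos]
  have hA10 : A 1 0 ≠ 0 := by
    intro h0
    rw [h0, mul_zero, sub_zero] at hdet
    nlinarith [sq_nonneg (A 0 0 - A 1 1)]
  -- the columns are `e₁` and `(A e₁ - c e₁) / s`, on which `A` acts as the rotation
  set P : Matrix (Fin 2) (Fin 2) ℝ := !![1, (A 0 0 - c) / s; 0, A 1 0 / s]
  have hP : IsUnit P.det := by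
    rw [isUnit_iff_ne_zero, det_fin_two_of, one_mul, mul_zero, sub_zero]
    exact div_ne_zero hA10 hs.ne'
  have hAP : A * P = P * rotMat (Real.arccos c) := by
    rw [rotMat, hcos, hsin, eta_fin_two A]
    simp only [P, mul_fin_two, EmbeddingLike.apply_eq_iff_eq, vecCons_inj, and_true]
    refine ⟨⟨?_, ?_⟩, ?_, ?_⟩ <;> field_simp
    · ring
    · linear_combination -hdet + hs2 - 2 * A 0 0 * hc
    · ring
    · linear_combination -2 * A 1 0 * hc
  refine ⟨P, Real.arccos c, (isUnit_iff_isUnit_det P).mpr hP, hsin ▸ hs.ne', ?_⟩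
  rw [mul_assoc, hAP, ← mul_assoc, nonsing_inv_mul _ hP, one_mul]

theorem eq_of_commute_rotMat {X : Matrix (Fin 2) (Fin 2) ℝ} {θ : ℝ} (hθ : Real.sin θ ≠ 0)
    (hX : Commute X (rotMat θ)) : X = !![X 0 0, -X 1 0; X 1 0, X 0 0] := by
  have h := hX.eq
  rw [eta_fin_two X, rotMat, mul_fin_two, mul_fin_two] at h
  simp only [EmbeddingLike.apply_eq_iff_eq, vecCons_inj, and_true] at h
  obtain ⟨⟨h00, h01⟩, -⟩ := h
  have e1 : X 0 1 = -X 1 0 := mul_left_cancel₀ hθ (by linarith)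
  have e2 : X 1 1 = X 0 0 := mul_left_cancel₀ hθ (by linarith)
  conv_lhs => rw [eta_fin_two X, e1, e2]

theorem exists_rotMat_eq {a b : ℝ} (h : a ^ 2 + b ^ 2 = 1) :
    ∃ φ, rotMat φ = !![a, -b; b, a] := by
  have hz : ‖(⟨a, b⟩ : ℂ)‖ = 1 := by
    rw [Complex.norm_def, Complex.normSq_mk, Real.sqrt_eq_one]; linear_combination h
  refine ⟨Complex.arg ⟨a, b⟩, ?_⟩
  have hcos := Complex.norm_mul_cos_arg ⟨a, b⟩
  have hsin := Complex.norm_mul_sin_arg ⟨a, b⟩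
  rw [hz, one_mul] at hcos hsin
  rw [rotMat, hcos, hsin]

theorem exists_eq_rotMat_of_commute_rotMat {X : Matrix (Fin 2) (Fin 2) ℝ} {θ : ℝ} {m : ℕ}
    (hθ : Real.sin θ ≠ 0) (hX : Commute X (rotMat θ)) (hm : m ≠ 0) (hXm : X ^ m = 1) :
    ∃ φ, X = rotMat φ := by
  have hform := eq_of_commute_rotMat hθ hX
  have hdet : X.det = X 0 0 ^ 2 + X 1 0 ^ 2 := by
    conv_lhs => rw [hform]
    rw [det_fin_two_of]; ring
  have hdet1 : X.det = 1 :=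
    (pow_eq_one_iff_of_nonneg (by rw [hdet]; positivity) hm).mp (by rw [← det_pow, hXm, det_one])
  obtain ⟨φ, hφ⟩ := exists_rotMat_eq (hdet ▸ hdet1)
  exact ⟨φ, hform.trans hφ.symm⟩

theorem exists_conj_eq_rotMat_of_pow_eq_one {A : Matrix (Fin 2) (Fin 2) ℝ} {n : ℕ}
    (hn : n ≠ 0) (hA : A ^ n = 1) (hA2 : A ^ 2 ≠ 1) :
    ∃ (P : Matrix (Fin 2) (Fin 2) ℝ) (θ : ℝ),
      IsUnit P ∧ Real.sin θ ≠ 0 ∧ P⁻¹ * A * P = rotMat θ := by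
  have hdet := det_eq_one_of_pow_eq_one hn hA hA2
  have htr := sq_trace_lt_four_mul_det_of_pow_eq_one hn hA hA2
  rw [hdet] at htr
  exact exists_conj_eq_rotMat_of_det_eq_one hdet (by linarith)

theorem stmt_4_general (A B : Matrix (Fin 2) (Fin 2) ℝ)
    (hAfin : ∃ n : ℕ, 0 < n ∧ A ^ n = 1) (hBfin : ∃ n : ℕ, 0 < n ∧ B ^ n = 1)
    (hcomm : A * B = B * A)
    (hAord : ∀ j : ℕ, 0 < j → j < 3 → A ^ j ≠ 1) :
    ∃ (P : Matrix (Fin 2) (Fin 2) ℝ) (θ φ : ℝ), IsUnit P ∧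
      P⁻¹ * A * P = rotMat θ ∧ P⁻¹ * B * P = rotMat φ := by
  obtain ⟨n, hn, hAn⟩ := hAfin
  obtain ⟨m, hm, hBm⟩ := hBfin
  obtain ⟨P, θ, hP, hθ, hPA⟩ :=
    exists_conj_eq_rotMat_of_pow_eq_one hn.ne' hAn (hAord 2 two_pos (by norm_num))
  obtain ⟨u, rfl⟩ := hP
  rw [← coe_units_inv] at hPA
  have huB := (show Commute B A from hcomm.symm).units_inv_conj u
  rw [hPA] at huB
  have huBm := Units.conj_pow' u B m
  rw [hBm, mul_one, Units.inv_mul] at huBm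
  obtain ⟨φ, hφ⟩ := exists_eq_rotMat_of_commute_rotMat hθ huB hm.ne' huBm
  refine ⟨u, θ, φ, u.isUnit, ?_, ?_⟩ <;> rwa [← coe_units_inv]

theorem stmt_4 (A B : Matrix (Fin 2) (Fin 2) ℝ) (hA : IsUnit A) (hB : IsUnit B)
    (hAfin : ∃ n : ℕ, 0 < n ∧ A ^ n = 1) (hBfin : ∃ n : ℕ, 0 < n ∧ B ^ n = 1)
    (hcomm : A * B = B * A)
    (hAord : ∀ j : ℕ, 0 < j → j < 3 → A ^ j ≠ 1) :
    ∃ (P : Matrix (Fin 2) (Fin 2) ℝ) (θ φ : ℝ), IsUnit P ∧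
      P⁻¹ * A * P = rotMat θ ∧ P⁻¹ * B * P = rotMat φ :=
  stmt_4_general A B hAfin hBfin hcomm hAord
end

section
/- Let γ : ℝ → ℝ² be a differentiable map with [γ(t), γ'(t)] = 1 for all t ∈ ℝ, let A : ℝ² → ℝ² be a linear map, and let H : ℝ → ℝ be a differentiable function such that A(γ(t)) = γ(H(t)) for all t ∈ ℝ. Then H'(t) = det A for all t ∈ ℝ. -/
/-!
Differentiating `A (γ t) = γ (H t)` gives `A (γ' t) = H'(t) • γ'(H t)`. Since `det2 (A u) (A v) = det A * det2 u v`,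
applying `det2` to the pairs `(γ t, γ' t)` and `(A (γ t), A (γ' t)) = (γ (H t), H'(t) • γ'(H t))` turns the
normalisation `det2 γ γ' = 1` into `det A = H'(t)`.
-/

/-- The determinant of the 2×2 matrix whose columns are `u, v ∈ ℝ²`. -/
def det2 (u v : ℝ × ℝ) : ℝ := u.1 * v.2 - u.2 * v.1

lemma LinearMap.det_eq_det2 (A : (ℝ × ℝ) →ₗ[ℝ] (ℝ × ℝ)) :
    LinearMap.det A = det2 (A (1, 0)) (A (0, 1)) := by
  rw [← LinearMap.det_toMatrix (Module.Basis.finTwoProd ℝ) A, Matrix.det_fin_two]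
  simp only [toMatrix_apply, Module.Basis.finTwoProd_zero, Module.Basis.finTwoProd_one,
    Module.Basis.coe_finTwoProd_repr, Matrix.cons_val_zero, Matrix.cons_val_one, det2]
  ring

lemma LinearMap.apply_eq_fst_smul_add_snd_smul (A : (ℝ × ℝ) →ₗ[ℝ] (ℝ × ℝ)) (u : ℝ × ℝ) :
    A u = u.1 • A (1, 0) + u.2 • A (0, 1) := by
  rw [← map_smul, ← map_smul, ← map_add]
  simp

lemma det2_map (A : (ℝ × ℝ) →ₗ[ℝ] (ℝ × ℝ)) (u v : ℝ × ℝ) :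
    det2 (A u) (A v) = LinearMap.det A * det2 u v := by
  rw [A.det_eq_det2, A.apply_eq_fst_smul_add_snd_smul u, A.apply_eq_fst_smul_add_snd_smul v]
  simp only [det2, Prod.fst_add, Prod.snd_add, Prod.smul_fst, Prod.smul_snd, smul_eq_mul]
  ring

lemma det2_smul_right (c : ℝ) (u v : ℝ × ℝ) : det2 u (c • v) = c * det2 u v := by
  simp only [det2, Prod.smul_fst, Prod.smul_snd, smul_eq_mul]
  ring

lemma LinearMap.map_deriv_eq_deriv_smul_deriv_comp {E : Type*} [NormedAddCommGroup E]
    [NormedSpace ℝ E] [FiniteDimensional ℝ E] (A : E →ₗ[ℝ] E) {γ : ℝ → E} {H : ℝ → ℝ} {t : ℝ}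
    (hγ : Differentiable ℝ γ) (hH : DifferentiableAt ℝ H t) (hAγ : ∀ s, A (γ s) = γ (H s)) :
    A (deriv γ t) = deriv H t • deriv γ (H t) := by
  have hleft : HasDerivAt (fun s => A (γ s)) (A (deriv γ t)) t :=
    (LinearMap.toContinuousLinearMap A).hasFDerivAt.comp_hasDerivAt t (hγ t).hasDerivAt
  have hright : HasDerivAt (γ ∘ H) (deriv H t • deriv γ (H t)) t :=
    (hγ (H t)).hasDerivAt.scomp t hH.hasDerivAt
  rw [show (fun s => A (γ s)) = γ ∘ H from funext hAγ] at hleft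
  exact hleft.unique hright

theorem stmt_5 (γ : ℝ → ℝ × ℝ) (hγ : Differentiable ℝ γ)
    (hdet : ∀ t : ℝ, det2 (γ t) (deriv γ t) = 1)
    (A : (ℝ × ℝ) →ₗ[ℝ] (ℝ × ℝ)) (H : ℝ → ℝ) (hH : Differentiable ℝ H)
    (hAγ : ∀ t : ℝ, A (γ t) = γ (H t)) :
    ∀ t : ℝ, deriv H t = LinearMap.det A := by
  intro t
  have hderiv := A.map_deriv_eq_deriv_smul_deriv_comp hγ (hH t) hAγ
  calc deriv H t = deriv H t * det2 (γ (H t)) (deriv γ (H t)) := by rw [hdet, mul_one]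
    _ = det2 (A (γ t)) (A (deriv γ t)) := by rw [hAγ, hderiv, det2_smul_right]
    _ = LinearMap.det A := by rw [det2_map, hdet, mul_one]
end

section
/- Let γ : ℝ → ℂ be a C¹-smooth, 2π-periodic map and let a, λ ∈ ℝ. Suppose that γ(t + a) − γ(t) = λ·(γ'(t) + γ'(t + a)) for all t ∈ ℝ. Then for every integer n with c_n(γ) ≠ 0 one has e^{ina} − 1 = i·λ·n·(e^{ina} + 1). In particular, if e^{ia} ≠ −1 and at least one of c₁(γ), c₋₁(γ) is nonzero, then λ = tan(a/2). -/
/-- The `n`-th Fourier coefficient of a `2π`-periodic function `γ : ℝ → ℂ`. -/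
noncomputable def fourierCoef (γ : ℝ → ℂ) (n : ℤ) : ℂ :=
  (1 / (2 * (Real.pi : ℂ))) * ∫ t in (0 : ℝ)..(2 * Real.pi),
    γ t * Complex.exp (-(Complex.I * n * t))

/-! Taking the `n`-th Fourier coefficient of the functional equation turns translation by `a`
into multiplication by `e^{ina}` and differentiation into multiplication by `in`, so
`(e^{ina} - 1) cₙ = iλn (e^{ina} + 1) cₙ`. For `n = ±1` and `e^{ia} = w²` with
`w = e^{ia/2}`, this reads `2i sin(a/2) w = 2iλ cos(a/2) w`, i.e. `λ = tan(a/2)`. -/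

open Complex Function MeasureTheory
open scoped Real

theorem Function.Periodic.deriv {𝕜 F : Type*} [NontriviallyNormedField 𝕜]
    [NormedAddCommGroup F] [NormedSpace 𝕜 F] {f : 𝕜 → F} {T : 𝕜} (hf : Periodic f T) :
    Periodic (deriv f) T := by
  intro t
  rw [← deriv_comp_add_const, hf.funext]

theorem periodic_exp_neg_I_mul (n : ℤ) :
    Periodic (fun t : ℝ => exp (-(I * n * t))) (2 * π) := by
  intro t
  have h : -(I * n * ((t + 2 * π : ℝ) : ℂ)) = -(I * n * t) + (-n : ℤ) * (2 * π * I) := by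
    push_cast; ring
  simp only [h, exp_add, exp_int_mul_two_pi_mul_I, mul_one]

theorem continuous_exp_neg_I_mul (n : ℤ) : Continuous fun t : ℝ => exp (-(I * n * t)) := by
  fun_prop

theorem IntervalIntegrable.mul_exp_neg_I_mul {f : ℝ → ℂ} {a b : ℝ}
    (hf : IntervalIntegrable f volume a b) (n : ℤ) :
    IntervalIntegrable (fun t => f t * exp (-(I * n * t))) volume a b :=
  hf.mul_continuousOn (continuous_exp_neg_I_mul n).continuousOn

theorem fourierCoef_add {f g : ℝ → ℂ} (hf : IntervalIntegrable f volume 0 (2 * π))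
    (hg : IntervalIntegrable g volume 0 (2 * π)) (n : ℤ) :
    fourierCoef (fun t => f t + g t) n = fourierCoef f n + fourierCoef g n := by
  simp only [fourierCoef, add_mul, ← mul_add,
    intervalIntegral.integral_add (hf.mul_exp_neg_I_mul n) (hg.mul_exp_neg_I_mul n)]

theorem fourierCoef_sub {f g : ℝ → ℂ} (hf : IntervalIntegrable f volume 0 (2 * π))
    (hg : IntervalIntegrable g volume 0 (2 * π)) (n : ℤ) :
    fourierCoef (fun t => f t - g t) n = fourierCoef f n - fourierCoef g n := by
  simp only [fourierCoef, sub_mul, ← mul_sub,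
    intervalIntegral.integral_sub (hf.mul_exp_neg_I_mul n) (hg.mul_exp_neg_I_mul n)]

theorem fourierCoef_const_mul (c : ℂ) (f : ℝ → ℂ) (n : ℤ) :
    fourierCoef (fun t => c * f t) n = c * fourierCoef f n := by
  simp only [fourierCoef, mul_assoc, intervalIntegral.integral_const_mul]
  ring

theorem fourierCoef_comp_add_right {f : ℝ → ℂ} (hf : Periodic f (2 * π)) (a : ℝ)
    (n : ℤ) :
    fourierCoef (fun t => f (t + a)) n = exp (I * n * a) * fourierCoef f n := by
  have hper : Periodic (fun t => f t * exp (-(I * n * t))) (2 * π) :=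
    hf.mul (periodic_exp_neg_I_mul n)
  have hshift : ∀ t : ℝ, f (t + a) * exp (-(I * n * t))
      = exp (I * n * a) * (f (t + a) * exp (-(I * n * ((t + a : ℝ) : ℂ)))) := by
    intro t
    rw [mul_left_comm, ← exp_add]
    push_cast
    ring_nf
  simp only [fourierCoef, hshift, intervalIntegral.integral_const_mul,
    intervalIntegral.integral_comp_add_right (fun t => f t * exp (-(I * n * t))), zero_add]
  rw [add_comm _ a, hper.intervalIntegral_add_eq a 0, zero_add]
  ring

theorem fourierCoef_deriv {f : ℝ → ℂ} (hf : Differentiable ℝ f)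
    (hf' : IntervalIntegrable (deriv f) volume 0 (2 * π))
    (hper : Periodic f (2 * π)) (n : ℤ) :
    fourierCoef (deriv f) n = I * n * fourierCoef f n := by
  have hexp : ∀ t : ℝ, HasDerivAt (fun s : ℝ => exp (-(I * n * s)))
      (-(I * n) * exp (-(I * n * t))) t := by
    intro t
    simpa [mul_comm] using ((ofRealCLM.hasDerivAt (x := t)).const_mul (I * n)).neg.cexp
  have hparts := intervalIntegral.integral_mul_deriv_eq_deriv_mul (a := 0) (b := 2 * π)
    (fun t _ => hexp t) (fun t _ => (hf t).hasDerivAt)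
    ((continuous_const.mul (continuous_exp_neg_I_mul n)).intervalIntegrable _ _) hf'
  have hend : exp (-(I * n * ((2 * π : ℝ) : ℂ))) * f (2 * π)
      = exp (-(I * n * ((0 : ℝ) : ℂ))) * f 0 := by
    simpa only [zero_add, Pi.mul_apply] using ((periodic_exp_neg_I_mul n).mul hper) 0
  rw [hend, sub_self, zero_sub] at hparts
  simp only [mul_assoc (-(I * (n : ℂ))), intervalIntegral.integral_const_mul] at hparts
  simp only [fourierCoef, mul_comm (deriv f _), mul_comm (f _), hparts]
  ring

theorem exp_sub_one_eq_of_neg {z c : ℂ} (h : exp (-z) - 1 = -c * (exp (-z) + 1)) :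
    exp z - 1 = c * (exp z + 1) := by
  have hinv : exp z * exp (-z) = 1 := by rw [← exp_add, add_neg_cancel, exp_zero]
  linear_combination (-exp z) * h + (1 + c) * hinv

theorem eq_tan_half_of_exp_sub_one {x lam : ℝ} (hx : exp (I * x) ≠ -1)
    (h : exp (I * x) - 1 = I * lam * (exp (I * x) + 1)) : lam = Real.tan (x / 2) := by
  -- With `w = exp (I * x / 2)`, both `exp (I * x) ± 1` factor through `w`.
  set w := cos (x / 2) + sin (x / 2) * I with hw
  have hsq : exp (I * x) = w ^ 2 := by
    rw [hw, cos_add_sin_I, ← exp_nat_mul]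
    ring_nf
  have hpyth := sin_sq_add_cos_sq ((x : ℂ) / 2)
  have hadd : exp (I * x) + 1 = 2 * cos (x / 2) * w := by
    rw [hsq, hw]
    linear_combination sin ((x : ℂ) / 2) ^ 2 * I_sq - hpyth
  have hsub : exp (I * x) - 1 = 2 * I * sin (x / 2) * w := by
    rw [hsq, hw]
    linear_combination -sin ((x : ℂ) / 2) ^ 2 * I_sq + hpyth
  have hcos : cos ((x : ℂ) / 2) ≠ 0 := by
    intro h0
    apply hx
    linear_combination hadd + 2 * w * h0
  have hw0 : 2 * I * w ≠ 0 := by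
    rw [hw, cos_add_sin_I]
    exact mul_ne_zero (mul_ne_zero two_ne_zero I_ne_zero) (exp_ne_zero _)
  have hsin : sin ((x : ℂ) / 2) = lam * cos ((x : ℂ) / 2) :=
    mul_left_cancel₀ hw0 (by linear_combination h - hsub + I * lam * hadd)
  rw [← ofReal_inj, ofReal_tan, tan_eq_sin_div_cos, eq_div_iff (by push_cast; exact hcos)]
  push_cast
  exact hsin.symm

theorem exp_sub_one_mul_fourierCoef_of_shift_eq {γ : ℝ → ℂ} (hγ : ContDiff ℝ 1 γ)
    (hper : Periodic γ (2 * π)) {a lam : ℝ}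
    (heq : ∀ t : ℝ, γ (t + a) - γ t = (lam : ℂ) * (deriv γ t + deriv γ (t + a)))
    (n : ℤ) :
    (exp (I * n * a) - 1) * fourierCoef γ n
      = I * lam * n * (exp (I * n * a) + 1) * fourierCoef γ n := by
  have hcont : Continuous γ := hγ.continuous
  have hdcont : Continuous (deriv γ) := hγ.continuous_deriv le_rfl
  have hfun := congrArg (fourierCoef · n) (funext heq)
  rw [fourierCoef_sub (f := fun t => γ (t + a))
      ((hcont.comp (continuous_add_const a)).intervalIntegrable _ _)
      (hcont.intervalIntegrable _ _),
    fourierCoef_const_mul,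
    fourierCoef_add (g := fun t => deriv γ (t + a)) (hdcont.intervalIntegrable _ _)
      ((hdcont.comp (continuous_add_const a)).intervalIntegrable _ _),
    fourierCoef_comp_add_right hper, fourierCoef_comp_add_right hper.deriv,
    fourierCoef_deriv (hγ.differentiable one_ne_zero) (hdcont.intervalIntegrable _ _) hper] at hfun
  linear_combination hfun

theorem stmt_8 (γ : ℝ → ℂ) (hγ : ContDiff ℝ 1 γ)
    (hper : ∀ t : ℝ, γ (t + 2 * Real.pi) = γ t)
    (a lam : ℝ)
    (heq : ∀ t : ℝ, γ (t + a) - γ t = (lam : ℂ) * (deriv γ t + deriv γ (t + a))) :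
    (∀ n : ℤ, fourierCoef γ n ≠ 0 →
      Complex.exp (Complex.I * n * a) - 1 =
        Complex.I * lam * n * (Complex.exp (Complex.I * n * a) + 1)) ∧
    (Complex.exp (Complex.I * a) ≠ -1 →
      (fourierCoef γ 1 ≠ 0 ∨ fourierCoef γ (-1) ≠ 0) →
      lam = Real.tan (a / 2)) := by
  have hcoef : ∀ n : ℤ, fourierCoef γ n ≠ 0 →
      exp (I * n * a) - 1 = I * lam * n * (exp (I * n * a) + 1) := fun n hn =>
    mul_right_cancel₀ hn (exp_sub_one_mul_fourierCoef_of_shift_eq hγ hper heq n)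
  refine ⟨hcoef, fun ha h1 => eq_tan_half_of_exp_sub_one ha ?_⟩
  rcases h1 with h1 | h1
  · simpa using hcoef 1 h1
  · exact exp_sub_one_eq_of_neg (by simpa using hcoef (-1) h1)
end

section
/- Let k ≥ 3 and r be coprime natural numbers with 0 < r < k. Let γ : ℝ → ℂ be a C²-smooth, 2π-periodic map, injective on [0, 2π), whose image is the boundary of a strictly convex body K ⊆ ℂ. Let B : ℂ → ℂ be an ℝ-linear map of exact order k with B(γ(t)) = γ(t + 2πr/k) for all t ∈ ℝ, and suppose there is a constant λ > 0 such that γ(t + 4πr/k) − γ(t) = λ·γ'(t + 2πr/k) for all t ∈ ℝ. Then there exist complex numbers c₁, c₋₁ such that γ(t) = c₁·e^{it} + c₋₁·e^{−it} for all t ∈ ℝ; in particular, the image of γ is an ellipse. -/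
/-!
Shifting the billiard relation back by `a = 2πr/k` and using `B⁻¹ = B^(k-1)` turns it into the
linear ODE `λ γ' = (B - B⁻¹) γ`, i.e. `γ' = M γ` for a real-linear `M`. By Cayley–Hamilton,
`M² = τ M - δ`. Integrating over a period the derivatives of `(‖γ'‖² + δ ‖γ‖²) / 2` (which is
`τ ‖γ'‖²`) and of `⟪γ, γ'⟫ - τ ‖γ‖² / 2` (which is `‖γ'‖² - δ ‖γ‖²`) shows `τ = 0` and `δ > 0`.
Hence `γ t = cos (ω t) • u + sin (ω t) • v` with `ω = √δ`; a `2π`-periodic curve of this form that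
is injective on `[0, 2π)` must have `ω = 1`.
-/

open Real Set intervalIntegral

theorem smul_deriv_eq_sub_of_shift {E : Type*} [NormedAddCommGroup E] [NormedSpace ℝ E]
    {γ : ℝ → E} {B : E →ₗ[ℝ] E} {k : ℕ} (hk : k ≠ 0) (hBk : B ^ k = 1) {a lam : ℝ}
    (hBγ : ∀ t, B (γ t) = γ (t + a))
    (heq : ∀ t, γ (t + 2 * a) - γ t = lam • deriv γ (t + a)) (t : ℝ) :
    lam • deriv γ t = (B - B ^ (k - 1)) (γ t) := by
  have hprev : (B ^ (k - 1)) (γ t) = γ (t - a) := by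
    rw [show γ t = B (γ (t - a)) by rw [hBγ, sub_add_cancel], ← Module.End.mul_apply, ← pow_succ,
      Nat.sub_add_cancel (Nat.pos_of_ne_zero hk), hBk, Module.End.one_apply]
  have := heq (t - a)
  rw [sub_add_cancel, show t - a + 2 * a = t + a by ring, ← hBγ] at this
  rw [LinearMap.sub_apply, hprev, this]

open Polynomial in
theorem LinearMap.mul_self_eq_trace_smul_sub_det_smul {K V : Type*} [Field K] [AddCommGroup V]
    [Module K V] [FiniteDimensional K V] (hV : Module.finrank K V = 2) (f : V →ₗ[K] V) :
    f * f = LinearMap.trace K V f • f - LinearMap.det f • 1 := by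
  have := aeval_self_charpoly f
  rw [← charpoly_toMatrix f (Module.finBasisOfFinrankEq K V hV), Matrix.charpoly_fin_two,
    ← trace_eq_matrix_trace, det_toMatrix] at this
  simp only [map_add, map_sub, map_mul, aeval_X_pow, aeval_C, aeval_X,
    Algebra.algebraMap_eq_smul_one, smul_mul_assoc, one_mul] at this
  rw [← sub_eq_zero, ← this, sq]
  abel

theorem integral_norm_deriv_sq_pos {E : Type*} [NormedAddCommGroup E] [NormedSpace ℝ E]
    {γ γ' : ℝ → E} {a b : ℝ} (hγ : ∀ t, HasDerivAt γ (γ' t) t) (hγ' : Continuous γ')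
    (hab : a < b) (hne : ∃ s ∈ Icc a b, γ s ≠ γ a) :
    0 < ∫ t in a..b, ‖γ' t‖ ^ 2 := by
  have hc : Continuous γ := continuous_iff_continuousAt.2 fun t => (hγ t).continuousAt
  refine integral_pos hab (by fun_prop) (fun _ _ => by positivity) ?_
  by_contra! hzero
  obtain ⟨s, hs, hγs⟩ := hne
  refine hγs (constant_of_has_deriv_right_zero hc.continuousOn (fun t ht => ?_) s hs)
  have : γ' t = 0 := by simpa using hzero t (Ico_subset_Icc_self ht)
  exact this ▸ (hγ t).hasDerivWithinAt

theorem trace_eq_zero_and_det_pos_of_periodic {E : Type*} [NormedAddCommGroup E]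
    [InnerProductSpace ℝ E] {γ : ℝ → E} {M : E →L[ℝ] E} {τ δ T : ℝ}
    (hγ : ∀ t, HasDerivAt γ (M (γ t)) t) (hM : ∀ z, M (M z) = τ • M z - δ • z)
    (hT : 0 < T) (hper : γ T = γ 0) (hne : ∃ s ∈ Icc 0 T, γ s ≠ γ 0) : τ = 0 ∧ 0 < δ := by
  have hc : Continuous γ := continuous_iff_continuousAt.2 fun t => (hγ t).continuousAt
  have hγ' : ∀ t, HasDerivAt (fun t => M (γ t)) (τ • M (γ t) - δ • γ t) t := fun t =>
    hM (γ t) ▸ M.hasFDerivAt.comp_hasDerivAt t (hγ t)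
  have hA := integral_norm_deriv_sq_pos hγ (by fun_prop) hT hne
  have hφ₁ : ∀ t, HasDerivAt (fun t => (‖M (γ t)‖ ^ 2 + δ * ‖γ t‖ ^ 2) / 2)
      (τ * ‖M (γ t)‖ ^ 2) t := fun t => by
    refine (((hγ' t).norm_sq.add ((hγ t).norm_sq.const_mul δ)).div_const 2).congr_deriv ?_
    simp only [inner_sub_right, inner_smul_right, real_inner_self_eq_norm_sq, real_inner_comm]
    ring
  have hφ₂ : ∀ t, HasDerivAt (fun t => inner ℝ (γ t) (M (γ t)) - τ * ‖γ t‖ ^ 2 / 2)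
      (‖M (γ t)‖ ^ 2 - δ * ‖γ t‖ ^ 2) t := fun t => by
    refine (((hγ t).inner ℝ (hγ' t)).sub
      (((hγ t).norm_sq.const_mul τ).div_const 2)).congr_deriv ?_
    simp only [inner_sub_right, inner_smul_right, real_inner_self_eq_norm_sq]
    ring
  have h₁ := integral_eq_sub_of_hasDerivAt (fun t _ => hφ₁ t)
    (Continuous.intervalIntegrable (by fun_prop) 0 T)
  have h₂ := integral_eq_sub_of_hasDerivAt (fun t _ => hφ₂ t)
    (Continuous.intervalIntegrable (by fun_prop) 0 T)
  simp only [hper, sub_self] at h₁ h₂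
  rw [integral_const_mul, mul_eq_zero] at h₁
  rw [integral_sub (Continuous.intervalIntegrable (by fun_prop) _ _)
    (Continuous.intervalIntegrable (by fun_prop) _ _), integral_const_mul, sub_eq_zero] at h₂
  refine ⟨h₁.resolve_right hA.ne', pos_of_mul_pos_left (h₂ ▸ hA) ?_⟩
  exact integral_nonneg hT.le fun _ _ => by positivity

theorem eq_cos_smul_add_sin_smul_of_hasDerivAt {E : Type*} [NormedAddCommGroup E]
    [NormedSpace ℝ E] {γ : ℝ → E} {M : E →L[ℝ] E} {ω : ℝ} (hω : ω ≠ 0)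
    (hγ : ∀ t, HasDerivAt γ (M (γ t)) t) (hM : ∀ z, M (M z) = -ω ^ 2 • z) :
    γ = fun t => cos (ω * t) • γ 0 + sin (ω * t) • ω⁻¹ • M (γ 0) := by
  refine ODE_solution_unique_univ (v := fun _ => M) (s := fun _ => univ) (t₀ := 0)
    (fun _ => M.lipschitz.lipschitzOnWith) (fun t => ⟨hγ t, trivial⟩) (fun t => ⟨?_, trivial⟩)
    (by simp)
  have hlin : HasDerivAt (fun s => ω * s) ω t := by simpa using (hasDerivAt_id t).const_mul ω
  refine (((hasDerivAt_cos _).comp t hlin).smul_const (γ 0) |>.add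
    (((hasDerivAt_sin _).comp t hlin).smul_const (ω⁻¹ • M (γ 0)))).congr_deriv ?_
  simp only [map_add, map_smul, hM, smul_smul, smul_neg, neg_smul]
  field_simp
  module

theorem eq_one_of_injOn_cos_smul_add_sin_smul {E : Type*} [AddCommGroup E] [Module ℝ E]
    {γ : ℝ → E} {u v : E} {ω : ℝ} (hω : 0 < ω)
    (hγ : ∀ t, γ t = cos (ω * t) • u + sin (ω * t) • v)
    (hper : ∀ t, γ (t + 2 * π) = γ t) (hinj : InjOn γ (Ico 0 (2 * π))) : ω = 1 := by
  have h0 : (0 : ℝ) ∈ Ico 0 (2 * π) := ⟨le_rfl, two_pi_pos⟩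
  have hle : ω ≤ 1 := by
    by_contra! h
    have hmem : 2 * π / ω ∈ Ico 0 (2 * π) := ⟨by positivity, div_lt_self two_pi_pos h⟩
    exact (div_pos two_pi_pos hω).ne' <|
      hinj hmem h0 (by simp [hγ, mul_div_cancel₀ _ hω.ne'])
  have hcos : cos (2 * π * ω) = 1 := by
    by_contra hc
    set c := cos (2 * π * ω)
    set s := sin (2 * π * ω)
    -- periodicity at `t = 0` and `t = π / (2ω)`: a linear system in `u, v` of determinant
    -- `(c - 1)² + s² ≠ 0`, forcing `γ = 0`
    have h₁ : (c - 1) • u + s • v = 0 := by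
      have := hper 0
      simp only [hγ, zero_add, mul_zero, cos_zero, sin_zero, one_smul, zero_smul, add_zero]
        at this
      rw [mul_comm] at this
      linear_combination (norm := module) this
    have h₂ : -s • u + (c - 1) • v = 0 := by
      have := hper (π / 2 / ω)
      simp only [hγ, mul_add, mul_div_cancel₀ _ hω.ne', cos_add, sin_add, cos_pi_div_two,
        sin_pi_div_two] at this
      rw [mul_comm ω] at this
      linear_combination (norm := module) this
    have hd : (c - 1) ^ 2 + s ^ 2 ≠ 0 := by
      have : c - 1 ≠ 0 := sub_ne_zero.2 hc
      positivity
    have hu : u = 0 := by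
      apply smul_right_injective E hd
      linear_combination (norm := module) (c - 1) • h₁ - s • h₂
    have hv : v = 0 := by
      apply smul_right_injective E hd
      linear_combination (norm := module) s • h₁ + (c - 1) • h₂
    exact pi_ne_zero <| hinj ⟨pi_pos.le, by linarith [pi_pos]⟩ h0 (by simp [hγ, hu, hv])
  have := (cos_eq_one_iff_of_lt_of_lt (x := 2 * π * (ω - 1)) (by nlinarith [pi_pos])
    (by nlinarith [pi_pos])).1 (by rw [mul_sub, mul_one, cos_sub_two_pi, hcos])
  nlinarith [pi_pos]

theorem cos_mul_add_sin_mul_eq (u v : ℂ) (t : ℝ) :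
    (cos t : ℂ) * u + (sin t : ℂ) * v =
      (u - Complex.I * v) / 2 * Complex.exp (Complex.I * t) +
        (u + Complex.I * v) / 2 * Complex.exp (-(Complex.I * t)) := by
  rw [Complex.ofReal_cos, Complex.ofReal_sin, Complex.cos, Complex.sin]
  ring_nf

theorem stmt_12_general (k r : ℕ) (hk : 3 ≤ k)
    (γ : ℝ → ℂ) (hγ : ContDiff ℝ 2 γ)
    (hper : ∀ t : ℝ, γ (t + 2 * Real.pi) = γ t)
    (hinj : Set.InjOn γ (Set.Ico 0 (2 * Real.pi)))
    (B : ℂ →ₗ[ℝ] ℂ)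
    (hBk : B ^ k = 1)
    (hBγ : ∀ t : ℝ, B (γ t) = γ (t + 2 * Real.pi * r / k))
    (lam : ℝ) (hlam : 0 < lam)
    (heq : ∀ t : ℝ, γ (t + 4 * Real.pi * r / k) - γ t =
      (lam : ℂ) * deriv γ (t + 2 * Real.pi * r / k)) :
    ∃ c₁ cneg : ℂ, ∀ t : ℝ,
      γ t = c₁ * Complex.exp (Complex.I * t) + cneg * Complex.exp (-(Complex.I * t)) := by
  set M : ℂ →ₗ[ℝ] ℂ := lam⁻¹ • (B - B ^ (k - 1))
  have hγM : ∀ t, HasDerivAt γ (M.toContinuousLinearMap (γ t)) t := fun t => by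
    have h := smul_deriv_eq_sub_of_shift (by omega) hBk hBγ
      (fun t => by rw [Complex.real_smul, ← heq]; congr 3; ring) t
    rw [← eq_inv_smul_iff₀ hlam.ne'] at h
    have hd := ((hγ.differentiable (by norm_num)) t).hasDerivAt
    rwa [h] at hd
  obtain ⟨τ, δ, hM⟩ : ∃ τ δ : ℝ, ∀ z, M (M z) = τ • M z - δ • z := ⟨_, _, fun z => by
    simpa using LinearMap.congr_fun
      (M.mul_self_eq_trace_smul_sub_det_smul Complex.finrank_real_complex) z⟩
  have hne : ∃ s ∈ Icc 0 (2 * π), γ s ≠ γ 0 :=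
    ⟨π, ⟨pi_pos.le, by linarith [pi_pos]⟩, fun h => pi_ne_zero
      (hinj ⟨pi_pos.le, by linarith [pi_pos]⟩ ⟨le_rfl, two_pi_pos⟩ h)⟩
  obtain ⟨rfl, hδ⟩ :=
    trace_eq_zero_and_det_pos_of_periodic hγM hM two_pi_pos (by simpa using hper 0) hne
  have hsol := eq_cos_smul_add_sin_smul_of_hasDerivAt (sqrt_pos.2 hδ).ne' hγM
    (fun z => by simp [hM, sq_sqrt hδ.le])
  have hω := eq_one_of_injOn_cos_smul_add_sin_smul (sqrt_pos.2 hδ) (congrFun hsol) hper hinj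
  refine ⟨(γ 0 - Complex.I * M (γ 0)) / 2, (γ 0 + Complex.I * M (γ 0)) / 2, fun t => ?_⟩
  rw [← cos_mul_add_sin_mul_eq, congrFun hsol t, hω]
  simp [Complex.real_smul]

theorem stmt_12 (k r : ℕ) (hk : 3 ≤ k) (hcop : Nat.Coprime r k)
    (hr0 : 0 < r) (hrk : r < k)
    (γ : ℝ → ℂ) (hγ : ContDiff ℝ 2 γ)
    (hper : ∀ t : ℝ, γ (t + 2 * Real.pi) = γ t)
    (hinj : Set.InjOn γ (Set.Ico 0 (2 * Real.pi)))
    (K : Set ℂ) (hKcomp : IsCompact K) (hKconv : Convex ℝ K)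
    (hKint : (interior K).Nonempty) (hKstrict : StrictConvex ℝ K)
    (hbd : Set.range γ = frontier K)
    (B : ℂ →ₗ[ℝ] ℂ)
    (hBk : B ^ k = 1) (hBj : ∀ j : ℕ, 0 < j → j < k → B ^ j ≠ 1)
    (hBγ : ∀ t : ℝ, B (γ t) = γ (t + 2 * Real.pi * r / k))
    (lam : ℝ) (hlam : 0 < lam)
    (heq : ∀ t : ℝ, γ (t + 4 * Real.pi * r / k) - γ t =
      (lam : ℂ) * deriv γ (t + 2 * Real.pi * r / k)) :
    ∃ c₁ cneg : ℂ, ∀ t : ℝ,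
      γ t = c₁ * Complex.exp (Complex.I * t) + cneg * Complex.exp (-(Complex.I * t)) :=
  stmt_12_general k r hk γ hγ hper hinj B hBk hBγ lam hlam heq
end

section
/- Let K ⊆ ℝ² be a strictly convex body with 0 in its interior, whose boundary is a C²-smooth curve with strictly positive curvature, and let g_K be the gauge of K. Let A : ℝ² → ℝ² be a linear map of exact order k ≥ 3 with A(K) = K, let m be a natural number coprime to k, and set B = A^m. Define a = 1 if k ≡ 2 (mod 4), a = 2 if k ≡ 0 (mod 4), and a = 4 if k is odd. Then the function x ↦ g_K(B(x) − x) is constant on the boundary of K if and only if there exists a linear map C : ℝ² → ℝ² of exact order a·k such that C∘A = A∘C and C(K) = K. -/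
section Gauge

open Set
open scoped Pointwise

variable {E : Type*} [AddCommGroup E] [Module ℝ E] {K : Set E}

lemma gauge_apply_eq_of_image_eq {T : E →ₗ[ℝ] E} (hTi : Function.Injective T) (hTK : T '' K = K)
    (y : E) : gauge K (T y) = gauge K y := by
  have hmem : ∀ r : ℝ, T y ∈ r • K ↔ y ∈ r • K := fun r => by
    conv_lhs => rw [← hTK, ← image_smul_set, hTi.mem_set_image]
  simp only [gauge_def, hmem]

variable [TopologicalSpace E]

lemma gauge_apply_eq_of_pow_eq_one [T1Space E] [Nontrivial E] (hKa : Absorbent ℝ K)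
    (hKb : Bornology.IsVonNBounded ℝ K) {T : E →ₗ[ℝ] E} {n : ℕ} (hTn : T ^ n = 1) (hn : n ≠ 0)
    {c : ℝ} (hT : ∀ y, gauge K (T y) = c * gauge K y) (y : E) :
    gauge K (T y) = gauge K y := by
  obtain ⟨x, hx⟩ := exists_ne (0 : E)
  have hpos : 0 < gauge K x := (gauge_pos hKa hKb).2 hx
  have hc : 0 ≤ c := nonneg_of_mul_nonneg_left (hT x ▸ gauge_nonneg _) hpos
  have hpow : ∀ j : ℕ, gauge K ((T ^ j) x) = c ^ j * gauge K x := by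
    intro j
    induction j with
    | zero => simp
    | succ j ih => rw [pow_succ', Module.End.mul_apply, hT, ih, pow_succ', mul_assoc]
  have hcn : c ^ n = 1 := by
    have := hpow n
    rw [hTn, Module.End.one_apply] at this
    exact (mul_eq_right₀ hpos.ne').1 this.symm
  rw [hT, (pow_eq_one_iff_of_nonneg hc hn).1 hcn, one_mul]

variable [IsTopologicalAddGroup E] [ContinuousSMul ℝ E]

lemma gauge_apply_eq_mul_gauge_of_frontier [T1Space E] (hKconv : Convex ℝ K) (hK0 : K ∈ nhds 0)
    (hKb : Bornology.IsVonNBounded ℝ K) {T : E →ₗ[ℝ] E} {c : ℝ}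
    (hT : ∀ x ∈ frontier K, gauge K (T x) = c) (y : E) :
    gauge K (T y) = c * gauge K y := by
  rcases eq_or_ne y 0 with rfl | hy
  · simp [gauge_zero]
  have hpos : 0 < gauge K y := (gauge_pos (absorbent_nhds_zero hK0) hKb).2 hy
  have hfr : (gauge K y)⁻¹ • y ∈ frontier K := by
    rw [← gauge_eq_one_iff_mem_frontier hKconv hK0, gauge_smul_of_nonneg (inv_nonneg.2 hpos.le),
      smul_eq_mul, inv_mul_cancel₀ hpos.ne']
  have := hT _ hfr
  rw [map_smul, gauge_smul_of_nonneg (inv_nonneg.2 hpos.le), smul_eq_mul, inv_mul_eq_iff_eq_mul₀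
    hpos.ne'] at this
  rw [this, mul_comm]

lemma image_eq_of_gauge_apply_eq (hKconv : Convex ℝ K) (hK0 : K ∈ nhds 0) (hKc : IsClosed K)
    {T : E →ₗ[ℝ] E} (hTs : Function.Surjective T) (hT : ∀ y, gauge K (T y) = gauge K y) :
    T '' K = K := by
  have hpre : T ⁻¹' K = K := by
    ext y
    rw [mem_preimage, ← hKc.closure_eq, ← gauge_le_one_iff_mem_closure hKconv hK0,
      ← gauge_le_one_iff_mem_closure hKconv hK0, hT]
  rw [← hpre, image_preimage_eq K hTs, hpre]

lemma exists_gauge_apply_eq_const_iff_image_eq [T2Space E] [Nontrivial E] (hKcomp : IsCompact K)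
    (hKconv : Convex ℝ K) (hK0 : K ∈ nhds 0) {T : E →ₗ[ℝ] E} {n : ℕ} (hTn : T ^ n = 1)
    (hn : n ≠ 0) :
    (∃ c, ∀ x ∈ frontier K, gauge K (T x) = c) ↔ T '' K = K := by
  have hTbij : Function.Bijective T := (Module.End.isUnit_iff T).1 (.of_pow_eq_one hTn hn)
  have hKb := hKcomp.isVonNBounded ℝ
  constructor
  · rintro ⟨c, hc⟩
    refine image_eq_of_gauge_apply_eq hKconv hK0 hKcomp.isClosed hTbij.2 fun y => ?_
    exact gauge_apply_eq_of_pow_eq_one (absorbent_nhds_zero hK0) hKb hTn hn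
      (gauge_apply_eq_mul_gauge_of_frontier hKconv hK0 hKb hc) y
  · intro hTK
    refine ⟨1, fun x hx => ?_⟩
    rw [gauge_apply_eq_of_image_eq hTbij.1 hTK, gauge_eq_one_iff_mem_frontier hKconv hK0]
    exact hx

end Gauge

section RootsOfUnity

lemma orderOf_eq_two_mul_of_orderOf_sq {G : Type*} [Monoid G] {u : G} {n : ℕ}
    (hu : orderOf (u ^ 2) = n) (hn : Even n) : orderOf u = 2 * n := by
  rw [orderOf_pow' u two_ne_zero] at hu
  rcases Nat.even_or_odd (orderOf u) with ho | ho
  · rw [Nat.gcd_eq_right ho.two_dvd] at hu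
    have := ho.two_dvd
    omega
  · rw [Nat.Coprime.gcd_eq_one (Nat.coprime_two_right.2 ho), Nat.div_one] at hu
    exact absurd (hu ▸ hn) (Nat.not_even_iff_odd.2 ho)

variable {R : Type*} [CommRing R] [IsDomain R] {ζ u : R} {k : ℕ}

lemma pow_div_two_eq_neg_one_of_orderOf (hζ : orderOf ζ = k) (hk : Even k) (hk0 : k ≠ 0) :
    ζ ^ (k / 2) = -1 := by
  have hsq : ζ ^ (k / 2) * ζ ^ (k / 2) = 1 := by
    rw [← pow_add, ← two_mul, Nat.two_mul_div_two_of_even hk, ← hζ, pow_orderOf_eq_one]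
  exact (mul_self_eq_one_iff.1 hsq).resolve_left
    (pow_ne_one_of_lt_orderOf (by have := hk.two_dvd; omega) (by omega))

lemma orderOf_eq_four_mul_of_sq_eq_neg (hR : ringChar R ≠ 2) (hζ : orderOf ζ = k) (hk : Odd k)
    (hu : u ^ 2 = -ζ) : orderOf u = 4 * k := by
  have h2 : orderOf (-1 : R) = 2 := by rw [orderOf_neg_one, if_neg hR]
  have hneg : orderOf (-ζ) = 2 * k := by
    rw [neg_eq_neg_one_mul, (Commute.all _ _).orderOf_mul_eq_mul_orderOf_of_coprime
      (by rw [h2, hζ]; exact Nat.coprime_two_left.2 hk), h2, hζ]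
  rw [orderOf_eq_two_mul_of_orderOf_sq (hu ▸ hneg) (even_two_mul k)]
  ring

lemma orderOf_eq_two_mul_of_sq_eq_neg (hζ : orderOf ζ = k) (hk : 4 ∣ k) (hk0 : k ≠ 0)
    (hu : u ^ 2 = -ζ) : orderOf u = 2 * k := by
  obtain ⟨j, rfl⟩ := hk
  have hneg : -ζ = ζ ^ (2 * j + 1) := by
    rw [pow_succ, show 2 * j = 4 * j / 2 by omega,
      pow_div_two_eq_neg_one_of_orderOf hζ ⟨2 * j, by ring⟩ (by omega), neg_one_mul]
  have hcop : Nat.Coprime (4 * j) (2 * j + 1) := by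
    rw [show 4 * j = 2 * (2 * j) by ring, Nat.coprime_mul_iff_left, Nat.coprime_two_left]
    exact ⟨odd_two_mul_add_one j, by simp⟩
  have : orderOf (u ^ 2) = 4 * j := by rw [hu, hneg, Nat.Coprime.orderOf_pow (by rwa [hζ]), hζ]
  exact orderOf_eq_two_mul_of_orderOf_sq this ⟨2 * j, by ring⟩

lemma pow_eq_one_of_sq_eq_neg (hζ : orderOf ζ = k) (hk : k % 4 = 2) (hu : u ^ 2 = -ζ) :
    u ^ k = 1 := by
  have hhalf : Odd (k / 2) := Nat.odd_iff.2 (by omega)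
  have hk2 : k = 2 * (k / 2) := by omega
  rw [hk2, pow_mul, hu, neg_pow, hhalf.neg_one_pow,
    pow_div_two_eq_neg_one_of_orderOf hζ (Nat.even_iff.2 (by omega)) (by omega)]
  ring

lemma pow_mul_eq_one_of_sq_eq_neg (hR : ringChar R ≠ 2) (hζ : orderOf ζ = k) (hk0 : k ≠ 0)
    (hu : u ^ 2 = -ζ) {a : ℕ} (ha : a = if k % 4 = 2 then 1 else if k % 4 = 0 then 2 else 4) :
    u ^ (a * k) = 1 := by
  subst ha
  split_ifs with h2 h0
  · rw [one_mul]
    exact pow_eq_one_of_sq_eq_neg hζ h2 hu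
  · rw [← orderOf_eq_two_mul_of_sq_eq_neg hζ (Nat.dvd_of_mod_eq_zero h0) hk0 hu]
    exact pow_orderOf_eq_one u
  · rw [← orderOf_eq_four_mul_of_sq_eq_neg hR hζ (Nat.odd_iff.2 (by omega)) hu]
    exact pow_orderOf_eq_one u

lemma orderOf_eq_mul_of_sq_eq_neg (hR : ringChar R ≠ 2) (hζ : orderOf ζ = k) (hk0 : k ≠ 0)
    (hk2 : k % 4 ≠ 2) (hu : u ^ 2 = -ζ) {a : ℕ}
    (ha : a = if k % 4 = 2 then 1 else if k % 4 = 0 then 2 else 4) :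
    orderOf u = a * k := by
  rw [ha, if_neg hk2]
  split_ifs with h0
  · exact orderOf_eq_two_mul_of_sq_eq_neg hζ (Nat.dvd_of_mod_eq_zero h0) hk0 hu
  · exact orderOf_eq_four_mul_of_sq_eq_neg hR hζ (Nat.odd_iff.2 (by omega)) hu

end RootsOfUnity

lemma Complex.sq_div_norm_sub_one (ζ : ℂ) (hζ : ‖ζ‖ = 1) (hζ1 : ζ ≠ 1) :
    ((ζ - 1) / (‖ζ - 1‖ : ℂ)) ^ 2 = -ζ := by
  have hconj : ζ * (starRingEnd ℂ) ζ = 1 := by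
    rw [Complex.mul_conj, Complex.normSq_eq_norm_sq, hζ]; simp
  have hnorm : ((‖ζ - 1‖ : ℝ) : ℂ) ^ 2 = (ζ - 1) * ((starRingEnd ℂ) ζ - 1) := by
    rw [← Complex.ofReal_pow, ← Complex.normSq_eq_norm_sq, ← Complex.mul_conj, map_sub, map_one]
  have hne : ((‖ζ - 1‖ : ℝ) : ℂ) ^ 2 ≠ 0 := by simpa [sub_eq_zero] using hζ1
  rw [div_pow, div_eq_iff hne, hnorm]
  linear_combination (ζ - 1) * hconj

lemma sq_eq_one_of_pow_eq_one {R : Type*} [Ring R] [LinearOrder R] [IsStrictOrderedRing R] {x : R}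
    {k : ℕ} (hk : k ≠ 0) (h : x ^ k = 1) : x ^ 2 = 1 := by
  rcases (pow_eq_one_iff_of_ne_zero hk).1 h with rfl | ⟨rfl, -⟩ <;> norm_num

section ComplexStructure

variable {R : Type*} [Ring R] [Algebra ℝ R]

lemma exists_algHom_complex_apply_eq {A : R} {τ : ℝ} (hA : A * A = τ • A - 1) (hτ : τ ^ 2 < 4) :
    ∃ (ψ : ℂ →ₐ[ℝ] R) (z : ℂ), ψ z = A := by
  set b := √(4 - τ ^ 2) / 2
  have hb : 0 < b := by positivity
  have hb2 : b ^ 2 = 1 - τ ^ 2 / 4 := by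
    rw [div_pow, Real.sq_sqrt (by linarith)]; ring
  have hsq : (A - (τ / 2) • 1) * (A - (τ / 2) • 1) = (-b ^ 2) • (1 : R) := by
    rw [hb2]
    simp only [sub_mul, mul_sub, smul_mul_assoc, mul_smul_comm, one_mul, mul_one, hA]
    module
  set J : R := b⁻¹ • (A - (τ / 2) • 1)
  have hJ : J * J = -1 := by
    rw [smul_mul_smul_comm, hsq, smul_smul, show b⁻¹ * b⁻¹ * -b ^ 2 = -1 by field_simp,
      neg_one_smul]
  refine ⟨Complex.lift ⟨J, hJ⟩, ⟨τ / 2, b⟩, ?_⟩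
  rw [Complex.lift_apply, Complex.liftAux_apply, Algebra.algebraMap_eq_smul_one]
  simp only [J, smul_smul, mul_inv_cancel₀ hb.ne', one_smul]
  abel

lemma not_mem_range_algebraMap_of_orderOf [Nontrivial R] {A : R} {k : ℕ} (hA : orderOf A = k)
    (hk : 3 ≤ k) : A ∉ Set.range (algebraMap ℝ R) := by
  rintro ⟨c, rfl⟩
  have hck : c ^ k = 1 :=
    (algebraMap ℝ R).injective (by rw [map_pow, map_one, ← hA, pow_orderOf_eq_one])
  have hc2 : algebraMap ℝ R c ^ 2 = 1 := by
    rw [← map_pow, sq_eq_one_of_pow_eq_one (by omega) hck, map_one]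
  have := orderOf_le_of_pow_eq_one two_pos hc2
  omega

lemma orderOf_algHom_apply [Nontrivial R] (ψ : ℂ →ₐ[ℝ] R) (z : ℂ) : orderOf (ψ z) = orderOf z :=
  orderOf_injective (ψ : ℂ →* R) ψ.toRingHom.injective z

lemma exists_algHom_sub_one_eq_smul (ψ : ℂ →ₐ[ℝ] R) {ζ : ℂ} (hζ : ‖ζ‖ = 1) (hζ1 : ζ ≠ 1) :
    ∃ (r : ℝ) (u : ℂ), 0 < r ∧ u ^ 2 = -ζ ∧ ψ ζ - 1 = r • ψ u := by
  have hr : 0 < ‖ζ - 1‖ := norm_pos_iff.2 (sub_ne_zero.2 hζ1)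
  refine ⟨‖ζ - 1‖, (ζ - 1) / ‖ζ - 1‖, hr, Complex.sq_div_norm_sub_one ζ hζ hζ1, ?_⟩
  rw [← map_smul, Complex.real_smul, mul_div_cancel₀ _ (by exact_mod_cast hr.ne'), map_sub,
    map_one]

end ComplexStructure

section QuadraticFactor

open Polynomial

variable {τ δ : ℝ} {k : ℕ}

lemma pow_eq_one_of_dvd_X_pow_sub_one (hdvd : X ^ 2 - C τ * X + C δ ∣ (X ^ k - 1 : ℝ[X]))
    {z : ℂ} (hz : z ^ 2 - τ * z + δ = 0) : z ^ k = 1 := by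
  have := aeval_eq_zero_of_dvd_aeval_eq_zero (x := z) hdvd (by simpa using hz)
  simpa [sub_eq_zero] using this

lemma sq_lt_four_mul_of_dvd_X_pow_sub_one (hk : k ≠ 0)
    (hdvd : X ^ 2 - C τ * X + C δ ∣ (X ^ k - 1 : ℝ[X])) (hne : X ^ 2 - C τ * X + C δ ≠ X ^ 2 - 1) :
    τ ^ 2 < 4 * δ := by
  by_contra! hdisc
  rcases hdisc.eq_or_lt with hzero | hpos
  · have hC : C τ = C (τ / 2) + C (τ / 2) := by rw [← C_add, add_halves]
    have hδ : C δ = C (τ / 2) * C (τ / 2) := by rw [← C_mul]; congr 1; linarith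
    have hsq : X ^ 2 - C τ * X + C δ = (X - C (τ / 2)) * (X - C (τ / 2)) := by
      linear_combination (-X) * hC + hδ
    have hsep : (X ^ 2 - C τ * X + C δ).Separable :=
      (separable_X_pow_sub_C 1 (by exact_mod_cast hk) one_ne_zero).of_dvd (by simpa using hdvd)
    exact not_isUnit_X_sub_C _ (hsep.squarefree _ ⟨1, by rw [mul_one, hsq]⟩)
  · set s := √(τ ^ 2 - 4 * δ)
    have hs2 : s ^ 2 = τ ^ 2 - 4 * δ := Real.sq_sqrt (by linarith)
    have hroot : ∀ x : ℝ, x ^ 2 - τ * x + δ = 0 → x ^ 2 = 1 := fun x hx =>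
      sq_eq_one_of_pow_eq_one hk
        (by exact_mod_cast pow_eq_one_of_dvd_X_pow_sub_one hdvd (z := x) (by exact_mod_cast hx))
    have h₁ := hroot ((τ + s) / 2) (by linear_combination hs2 / 4)
    have h₂ := hroot ((τ - s) / 2) (by linear_combination hs2 / 4)
    have hs : 0 < s := Real.sqrt_pos.2 (by linarith)
    have hτ : τ = 0 := by nlinarith
    have hδ : δ = -1 := by nlinarith
    exact hne (by rw [hτ, hδ]; simp [sub_eq_add_neg])

lemma eq_one_and_sq_lt_four_of_dvd_X_pow_sub_one (hk : k ≠ 0)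
    (hdvd : X ^ 2 - C τ * X + C δ ∣ (X ^ k - 1 : ℝ[X])) (hne : X ^ 2 - C τ * X + C δ ≠ X ^ 2 - 1) :
    δ = 1 ∧ τ ^ 2 < 4 := by
  have hdisc := sq_lt_four_mul_of_dvd_X_pow_sub_one hk hdvd hne
  set b := √(4 * δ - τ ^ 2) / 2
  have hb2 : b ^ 2 = δ - τ ^ 2 / 4 := by
    rw [div_pow, Real.sq_sqrt (by linarith)]; ring
  have hz : (⟨τ / 2, b⟩ : ℂ) ^ 2 - τ * ⟨τ / 2, b⟩ + δ = 0 := by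
    apply Complex.ext <;> simp [sq] <;> nlinarith [hb2]
  have hnorm := Complex.norm_eq_one_of_pow_eq_one (pow_eq_one_of_dvd_X_pow_sub_one hdvd hz) hk
  have hnormSq : Complex.normSq ⟨τ / 2, b⟩ = 1 := by
    rw [Complex.normSq_eq_norm_sq, hnorm, one_pow]
  rw [Complex.normSq_mk] at hnormSq
  constructor <;> nlinarith

lemma exists_eq_X_sq_sub_C_mul_X_add_C {p : ℝ[X]} (hp : p.Monic) (h2 : p.natDegree = 2) :
    ∃ τ δ : ℝ, p = X ^ 2 - C τ * X + C δ := by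
  refine ⟨-p.coeff 1, p.coeff 0, ?_⟩
  conv_lhs => rw [hp.as_sum, h2]
  simp [Finset.sum_range_succ]
  ring

end QuadraticFactor

section TwoDimensional

open Module Polynomial

variable {V : Type*} [AddCommGroup V] [Module ℝ V]

lemma minpoly_natDegree_eq_two (hV : finrank ℝ V = 2) {A : Module.End ℝ V}
    (hA : A ∉ Set.range (algebraMap ℝ (Module.End ℝ V))) : (minpoly ℝ A).natDegree = 2 := by
  have : FiniteDimensional ℝ V := .of_finrank_pos (by omega)
  have : Nontrivial V := nontrivial_of_finrank_pos (R := ℝ) (by omega)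
  have hle : (minpoly ℝ A).natDegree ≤ 2 :=
    hV ▸ A.charpoly_natDegree ▸ natDegree_le_of_dvd (LinearMap.minpoly_dvd_charpoly A)
      A.charpoly_monic.ne_zero
  have hne : (minpoly ℝ A).natDegree ≠ 1 := fun h => hA (minpoly.natDegree_eq_one_iff.1 h)
  have hpos := minpoly.natDegree_pos (Algebra.IsIntegral.isIntegral (R := ℝ) A)
  omega

lemma linearIndependent_pair_apply_of_mul_self_eq_neg_one {J : Module.End ℝ V} (hJ : J * J = -1)
    {v : V} (hv : v ≠ 0) : LinearIndependent ℝ ![v, J v] := by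
  rw [LinearIndependent.pair_iff]
  intro s t hst
  have hJst : s • J v - t • v = 0 := by
    have := congrArg J hst
    rwa [map_add, map_smul, map_smul, ← Module.End.mul_apply, hJ, map_zero, LinearMap.neg_apply,
      Module.End.one_apply, smul_neg, ← sub_eq_add_neg] at this
  have hsum : (s ^ 2 + t ^ 2) • v = 0 := by
    calc (s ^ 2 + t ^ 2) • v = s • (s • v + t • J v) - t • (s • J v - t • v) := by module
    _ = 0 := by rw [hst, hJst, smul_zero, smul_zero, sub_zero]
  have := (smul_eq_zero.1 hsum).resolve_right hv
  constructor <;> nlinarith [sq_nonneg s, sq_nonneg t]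

lemma exists_algHom_apply_eq_of_commute (hV : finrank ℝ V = 2) (ψ : ℂ →ₐ[ℝ] Module.End ℝ V)
    {z : ℂ} (hz : z.im ≠ 0) {C : Module.End ℝ V} (hC : Commute C (ψ z)) : ∃ w, ψ w = C := by
  have : Nontrivial V := nontrivial_of_finrank_pos (R := ℝ) (by omega)
  set J := ψ Complex.I
  have hJ : J * J = -1 := by rw [← map_mul, Complex.I_mul_I, map_neg, map_one]
  have hψ : ∀ x y : ℝ, ψ (x + y * Complex.I) = algebraMap ℝ _ x + y • J := fun x y => by
    rw [map_add, ← Complex.real_smul, map_smul, AlgHom.map_coe_real_complex]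
  have hCJ : Commute C J := by
    have hz' : ψ z = algebraMap ℝ _ z.re + z.im • J := by rw [← hψ, Complex.re_add_im]
    have h := (hC.sub_right (Algebra.commutes z.re C).symm).smul_right z.im⁻¹
    rwa [hz', add_sub_cancel_left, smul_smul, inv_mul_cancel₀ hz, one_smul] at h
  obtain ⟨v, hv0⟩ := exists_ne (0 : V)
  have hspan : Submodule.span ℝ (Set.range ![v, J v]) = ⊤ :=
    (linearIndependent_pair_apply_of_mul_self_eq_neg_one hJ hv0).span_eq_top_of_card_eq_finrank
      (by simp [hV])
  obtain ⟨x, y, hxy⟩ : ∃ x y : ℝ, x • v + y • J v = C v := by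
    rw [← Submodule.mem_span_pair, ← Matrix.range_cons_cons_empty v (J v) ![], hspan]
    exact Submodule.mem_top
  have hv : ψ (x + y * Complex.I) v = C v := by
    rw [hψ, LinearMap.add_apply, Module.algebraMap_end_apply, LinearMap.smul_apply, hxy]
  refine ⟨x + y * Complex.I, LinearMap.ext_on_range hspan fun i => ?_⟩
  fin_cases i
  · exact hv
  · change ψ (x + y * Complex.I) (J v) = C (J v)
    rw [← Module.End.mul_apply, ((Commute.all _ _).map ψ).eq, Module.End.mul_apply, hv,
      ← Module.End.mul_apply, ← hCJ.eq, Module.End.mul_apply]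

lemma exists_algHom_complex_apply_eq_of_orderOf (hV : finrank ℝ V = 2) {A : Module.End ℝ V}
    {k : ℕ} (hA : orderOf A = k) (hk : 3 ≤ k) :
    ∃ (ψ : ℂ →ₐ[ℝ] Module.End ℝ V) (z : ℂ), ψ z = A := by
  have : FiniteDimensional ℝ V := .of_finrank_pos (by omega)
  have : Nontrivial V := nontrivial_of_finrank_pos (R := ℝ) (by omega)
  obtain ⟨τ, δ, hμ⟩ := exists_eq_X_sq_sub_C_mul_X_add_C
    (minpoly.monic (Algebra.IsIntegral.isIntegral A))
    (minpoly_natDegree_eq_two hV (not_mem_range_algebraMap_of_orderOf hA hk))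
  have hdvd : minpoly ℝ A ∣ X ^ k - 1 :=
    minpoly.dvd ℝ A (by simp [← hA, pow_orderOf_eq_one])
  have hne : minpoly ℝ A ≠ X ^ 2 - 1 := fun h => by
    have hA2 : A ^ 2 = 1 := by simpa [h, sub_eq_zero] using minpoly.aeval ℝ A
    have := orderOf_le_of_pow_eq_one two_pos hA2
    omega
  rw [hμ] at hdvd hne
  obtain ⟨rfl, hτ⟩ := eq_one_and_sq_lt_four_of_dvd_X_pow_sub_one (by omega) hdvd hne
  have hA2 : A * A = τ • A - 1 := by
    have := minpoly.aeval ℝ A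
    rw [hμ] at this
    simp only [map_add, map_sub, map_mul, map_pow, aeval_X, aeval_C, map_one,
      Algebra.algebraMap_eq_smul_one, smul_mul_assoc, one_mul] at this
    calc A * A = A ^ 2 - τ • A + 1 + (τ • A - 1) := by rw [sq]; abel
    _ = τ • A - 1 := by rw [this, zero_add]
  exact exists_algHom_complex_apply_eq hA2 hτ

lemma exists_orderOf_commute_image_eq_iff (hV : finrank ℝ V = 2) (ψ : ℂ →ₐ[ℝ] Module.End ℝ V)
    {lam ζ u : ℂ} {k : ℕ} (hk : 3 ≤ k) (hlam : orderOf lam = k) (hζ : orderOf ζ = k)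
    (hu : u ^ 2 = -ζ) {K : Set V} (hK : ψ lam '' K = K) {a : ℕ}
    (ha : a = if k % 4 = 2 then 1 else if k % 4 = 0 then 2 else 4) :
    (∃ C : Module.End ℝ V, orderOf C = a * k ∧ Commute C (ψ lam) ∧ C '' K = K) ↔
      ψ u '' K = K := by
  have : Nontrivial V := nontrivial_of_finrank_pos (R := ℝ) (by omega)
  have hR : ringChar ℂ ≠ 2 := by simp
  constructor
  · rintro ⟨C, hC, hCA, hCK⟩
    have him : lam.im ≠ 0 := fun h => not_mem_range_algebraMap_of_orderOf hlam hk
      ⟨lam.re, Complex.ext (by simp) (by simp [h])⟩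
    obtain ⟨w, rfl⟩ := exists_algHom_apply_eq_of_commute hV ψ him hCA
    rw [orderOf_algHom_apply] at hC
    have : NeZero (a * k) := ⟨by subst ha; split_ifs <;> omega⟩
    obtain ⟨i, -, rfl⟩ := (hC ▸ IsPrimitiveRoot.orderOf w).eq_pow_of_pow_eq_one
      (pow_mul_eq_one_of_sq_eq_neg hR hζ (by omega) hu ha)
    rw [map_pow, Module.End.coe_pow, Set.image_iterate_eq, Function.iterate_fixed hCK]
  · intro huK
    by_cases hk2 : k % 4 = 2
    · exact ⟨ψ lam, by rw [orderOf_algHom_apply, hlam, ha, if_pos hk2, one_mul], .refl _, hK⟩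
    · refine ⟨ψ u, ?_, (Commute.all u lam).map ψ, huK⟩
      rw [orderOf_algHom_apply, orderOf_eq_mul_of_sq_eq_neg hR hζ (by omega) hk2 hu ha]

end TwoDimensional

lemma orderOf_eq_iff_exact {G : Type*} [Monoid G] {x : G} {n : ℕ} (hn : 0 < n) :
    orderOf x = n ↔ x ^ n = 1 ∧ ∀ j : ℕ, 0 < j → j < n → x ^ j ≠ 1 := by
  rw [orderOf_eq_iff hn]
  exact and_congr_right fun _ => ⟨fun h j hj hjn => h j hjn hj, fun h j hjn hj => h j hj hjn⟩

lemma exists_forall_mul_eq_const_iff {α : Type*} {s : Set α} {f : α → ℝ} {r : ℝ} (hr : r ≠ 0) :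
    (∃ c : ℝ, ∀ x ∈ s, r * f x = c) ↔ ∃ c : ℝ, ∀ x ∈ s, f x = c :=
  ⟨fun ⟨c, hc⟩ => ⟨c / r, fun x hx => by rw [← hc x hx, mul_div_cancel_left₀ _ hr]⟩,
    fun ⟨c, hc⟩ => ⟨r * c, fun x hx => by rw [hc x hx]⟩⟩

theorem stmt_13_general (K : Set (ℝ × ℝ)) (hKcomp : IsCompact K) (hKconv : Convex ℝ K)
    (h0 : (0 : ℝ × ℝ) ∈ interior K)
    (k : ℕ) (hk : 3 ≤ k)
    (A : (ℝ × ℝ) →ₗ[ℝ] (ℝ × ℝ))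
    (hAk : A ^ k = 1) (hAj : ∀ j : ℕ, 0 < j → j < k → A ^ j ≠ 1)
    (hAK : A '' K = K)
    (m : ℕ) (hm : Nat.Coprime m k)
    (a : ℕ) (ha : a = if k % 4 = 2 then 1 else if k % 4 = 0 then 2 else 4) :
    (∃ c : ℝ, ∀ x ∈ frontier K, gauge K ((A ^ m) x - x) = c) ↔
      ∃ C : (ℝ × ℝ) →ₗ[ℝ] (ℝ × ℝ),
        C ^ (a * k) = 1 ∧ (∀ j : ℕ, 0 < j → j < a * k → C ^ j ≠ 1) ∧
        C ∘ₗ A = A ∘ₗ C ∧ C '' K = K := by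
  have hAord : orderOf A = k := (orderOf_eq_iff_exact (by omega)).2 ⟨hAk, hAj⟩
  have hak : 0 < a * k := by subst ha; split_ifs <;> omega
  obtain ⟨ψ, lam, rfl⟩ := exists_algHom_complex_apply_eq_of_orderOf (by simp) hAord hk
  rw [orderOf_algHom_apply] at hAord
  have hζ : orderOf (lam ^ m) = k := by
    rw [Nat.Coprime.orderOf_pow (by rwa [hAord, Nat.coprime_comm]), hAord]
  obtain ⟨r, u, hr, hu, hsub⟩ := exists_algHom_sub_one_eq_smul ψ
    (Complex.norm_eq_one_of_pow_eq_one (hζ ▸ pow_orderOf_eq_one _) (by omega))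
    (fun h => by rw [h, orderOf_one] at hζ; omega)
  have happly : ∀ x, (ψ lam ^ m) x - x = r • ψ u x := fun x => by
    simpa using LinearMap.congr_fun hsub x
  have hψu : ψ u ^ (a * k) = 1 := by
    rw [← map_pow, pow_mul_eq_one_of_sq_eq_neg (by simp) hζ (by omega) hu ha, map_one]
  calc (∃ c : ℝ, ∀ x ∈ frontier K, gauge K ((ψ lam ^ m) x - x) = c)
      ↔ ∃ c : ℝ, ∀ x ∈ frontier K, gauge K (ψ u x) = c := by
        simp only [happly, gauge_smul_of_nonneg hr.le, smul_eq_mul,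
          exists_forall_mul_eq_const_iff hr.ne']
    _ ↔ ψ u '' K = K := exists_gauge_apply_eq_const_iff_image_eq hKcomp hKconv
        (mem_interior_iff_mem_nhds.1 h0) hψu hak.ne'
    _ ↔ ∃ C, orderOf C = a * k ∧ Commute C (ψ lam) ∧ C '' K = K :=
        (exists_orderOf_commute_image_eq_iff (by simp) ψ hk hAord hζ hu hAK ha).symm
    _ ↔ _ := by
        simp only [orderOf_eq_iff_exact hak, commute_iff_eq, Module.End.mul_eq_comp, and_assoc]

theorem stmt_13 (K : Set (ℝ × ℝ)) (hKcomp : IsCompact K) (hKconv : Convex ℝ K)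
    (hKstrict : StrictConvex ℝ K) (h0 : (0 : ℝ × ℝ) ∈ interior K)
    -- the boundary is a C²-smooth curve with strictly positive curvature
    (γ : ℝ → ℝ × ℝ) (hγ : ContDiff ℝ 2 γ)
    (hper : ∀ t : ℝ, γ (t + 2 * Real.pi) = γ t)
    (hinj : Set.InjOn γ (Set.Ico 0 (2 * Real.pi)))
    (hreg : ∀ t : ℝ, deriv γ t ≠ 0)
    (hcurv : ∀ t : ℝ, 0 < det2 (deriv γ t) (deriv (deriv γ) t))
    (hbd : Set.range γ = frontier K)
    (k : ℕ) (hk : 3 ≤ k)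
    (A : (ℝ × ℝ) →ₗ[ℝ] (ℝ × ℝ))
    (hAk : A ^ k = 1) (hAj : ∀ j : ℕ, 0 < j → j < k → A ^ j ≠ 1)
    (hAK : A '' K = K)
    (m : ℕ) (hm : Nat.Coprime m k)
    (a : ℕ) (ha : a = if k % 4 = 2 then 1 else if k % 4 = 0 then 2 else 4) :
    (∃ c : ℝ, ∀ x ∈ frontier K, gauge K ((A ^ m) x - x) = c) ↔
      ∃ C : (ℝ × ℝ) →ₗ[ℝ] (ℝ × ℝ),
        C ^ (a * k) = 1 ∧ (∀ j : ℕ, 0 < j → j < a * k → C ^ j ≠ 1) ∧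
        C ∘ₗ A = A ∘ₗ C ∧ C '' K = K :=
  stmt_13_general K hKcomp hKconv h0 k hk A hAk hAj hAK m hm a ha
end

section
/- Let K ⊆ ℝ² be a nonempty compact convex set and m ≥ 1 a natural number. Suppose that for every natural number n, K is invariant under the rotation about the origin by angle 2π/(2ⁿ·m), i.e. R_{2π/(2ⁿm)}(K) = K. Then K is a closed disc centered at the origin: there exists R ≥ 0 such that K = {x ∈ ℝ² : |x| ≤ R}. -/
/-!
The angles of the rotations preserving `K` form an additive subgroup of `ℝ` containing
`2π / (2ⁿ m)` for every `n`, hence a dense one. As `K` is closed, the angles `θ` with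
`R_θ(K) ⊆ K` form a closed set, so every rotation maps `K` into itself. The circle through a
point of `K` of maximal norm then lies in `K`, and by convexity so does its convex hull, the
closed disc bounded by that circle.
-/

open Complex Metric
open scoped Pointwise

noncomputable def rotationAngles (K : Set ℂ) : AddSubgroup ℝ :=
  (MulAction.stabilizer Circle K).toAddSubgroup.comap Circle.expHom

theorem mem_rotationAngles {K : Set ℂ} {θ : ℝ} :
    θ ∈ rotationAngles K ↔ (fun x : ℂ => Complex.exp (θ * I) * x) '' K = K :=
  Iff.rfl

theorem AddSubgroup.dense_of_forall_div_two_pow_mem {S : AddSubgroup ℝ} {a : ℝ} (ha : 0 < a)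
    (h : ∀ n : ℕ, a / 2 ^ n ∈ S) : Dense (S : Set ℝ) := by
  refine S.dense_of_not_isolated_zero fun ε hε => ?_
  obtain ⟨n, hn⟩ := pow_unbounded_of_one_lt (a / ε) one_lt_two
  exact ⟨a / 2 ^ n, h n, by positivity, (div_lt_comm₀ (by positivity) hε).2 hn⟩

theorem isClosed_setOf_smul_subset {G X : Type*} [TopologicalSpace G] [TopologicalSpace X]
    [SMul G X] [ContinuousSMul G X] {K : Set X} (hK : IsClosed K) :
    IsClosed {g : G | g • K ⊆ K} := by
  simp only [Set.smul_set_subset_iff, Set.ofPred_forall]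
  exact isClosed_biInter fun x _ => hK.preimage (continuous_id.smul continuous_const)

theorem circle_smul_subset_of_dense_rotationAngles {K : Set ℂ} (hK : IsClosed K)
    (hdense : Dense (rotationAngles K : Set ℝ)) (c : Circle) : c • K ⊆ K := by
  obtain ⟨θ, rfl⟩ := Circle.exp_surjective c
  have hclosed : IsClosed (Circle.exp ⁻¹' {c : Circle | c • K ⊆ K}) :=
    (isClosed_setOf_smul_subset hK).preimage Circle.exp.continuous
  refine hclosed.closure_subset_iff.2 (fun φ hφ => ?_) (hdense θ)
  exact (MulAction.mem_stabilizer_iff.1 hφ).subset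

theorem Circle.exists_smul_eq_of_norm_eq {x y : ℂ} (h : ‖x‖ = ‖y‖) :
    ∃ c : Circle, c • x = y := by
  refine ⟨Circle.exp (arg y - arg x), ?_⟩
  have hx := norm_mul_exp_arg_mul_I x
  have hy := norm_mul_exp_arg_mul_I y
  set a := arg x
  set b := arg y
  rw [Circle.smul_def, Circle.coe_exp, smul_eq_mul, ← hx, ← hy, h, mul_left_comm,
    ← Complex.exp_add]
  push_cast
  ring_nf

theorem sphere_subset_of_circle_smul_subset {K : Set ℂ} (hK : ∀ c : Circle, c • K ⊆ K)
    {x : ℂ} (hx : x ∈ K) : sphere 0 ‖x‖ ⊆ K := by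
  intro y hy
  obtain ⟨c, rfl⟩ := Circle.exists_smul_eq_of_norm_eq (mem_sphere_zero_iff_norm.1 hy).symm
  exact hK c (Set.smul_mem_smul_set hx)

theorem exists_eq_closedBall_of_circle_smul_subset {K : Set ℂ} (hne : K.Nonempty)
    (hcomp : IsCompact K) (hconv : Convex ℝ K) (hK : ∀ c : Circle, c • K ⊆ K) :
    ∃ R, 0 ≤ R ∧ K = closedBall 0 R := by
  obtain ⟨x, hxK, hmax⟩ := hcomp.exists_isMaxOn hne continuous_norm.continuousOn
  refine ⟨‖x‖, norm_nonneg x, subset_antisymm (fun y hy => mem_closedBall_zero_iff.2 (hmax hy)) ?_⟩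
  rw [← convexHull_sphere_eq_closedBall 0 (norm_nonneg x)]
  exact convexHull_min (sphere_subset_of_circle_smul_subset hK hxK) hconv

theorem stmt_14 (K : Set ℂ) (hne : K.Nonempty) (hKcomp : IsCompact K)
    (hKconv : Convex ℝ K) (m : ℕ) (hm : 1 ≤ m)
    (hrot : ∀ n : ℕ,
      (fun x : ℂ => Complex.exp ((2 * Real.pi / (2 ^ n * m) : ℝ) * Complex.I) * x) '' K = K) :
    ∃ R : ℝ, 0 ≤ R ∧ K = {x : ℂ | ‖x‖ ≤ R} := by
  have hm : (0 : ℝ) < m := by exact_mod_cast hm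
  have hdense : Dense (rotationAngles K : Set ℝ) := by
    refine AddSubgroup.dense_of_forall_div_two_pow_mem (a := 2 * Real.pi / m) (by positivity)
      fun n => ?_
    rw [div_div, mul_comm (m : ℝ)]
    exact mem_rotationAngles.2 (hrot n)
  obtain ⟨R, hR, rfl⟩ := exists_eq_closedBall_of_circle_smul_subset hne hKcomp hKconv
    (circle_smul_subset_of_dense_rotationAngles hKcomp.isClosed hdense)
  exact ⟨R, hR, by ext; simp⟩
end

section
/- Let K ⊆ ℂ be a convex body with 0 in its interior and let B : ℂ → ℂ be an invertible ℝ-linear map with B(K) = K. Assume the gauge g_K is (Fréchet) differentiable at every nonzero point of ℂ. Let γ : ℝ → ℂ be a differentiable map such that the function t ↦ g_K(B(γ(t)) − γ(t)) is constant on ℝ, and fix t₀ ∈ ℝ with B(γ(t₀)) ≠ γ(t₀). Then the function f(τ) = g_K(B(γ(t₀)) − γ(τ)) + g_K(γ(τ) − B⁻¹(γ(t₀))) is differentiable at τ = t₀ and f'(t₀) = 0. -/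
/-! Write `p = γ t₀`. Since `B K = K`, the gauge is `B`-invariant, so
`g_K (γ τ - B⁻¹ p) = g_K (B (γ τ) - p)`. By the chain rule both terms of `f` then differentiate
through the one linear form `d g_K` at `B p - p ≠ 0`, and their derivatives add up to the
derivative at `t₀` of the displacement `τ ↦ g_K (B (γ τ) - γ τ)`, which is constant. -/

theorem gauge_image_linearEquiv {E F : Type*} [AddCommGroup E] [Module ℝ E] [AddCommGroup F]
    [Module ℝ F] (e : E ≃ₗ[ℝ] F) (s : Set E) (x : E) : gauge (e '' s) (e x) = gauge s x := by
  simp only [gauge_def, ← image_smul_set, e.injective.mem_set_image]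

section TwoPointLength

variable {E : Type*} [NormedAddCommGroup E] [NormedSpace ℝ E] {g : E → ℝ}
  {γ : ℝ → E} {γ' : E} {t₀ d : ℝ}

theorem hasDerivAt_comp_sub_add_comp_sub_symm (B : E ≃L[ℝ] E) (hg : ∀ y, g (B y) = g y)
    (hγ : HasDerivAt γ γ' t₀) (hgd : DifferentiableAt ℝ g (B (γ t₀) - γ t₀))
    (hd : HasDerivAt (fun τ => g (B (γ τ) - γ τ)) d t₀) :
    HasDerivAt (fun τ => g (B (γ t₀) - γ τ) + g (γ τ - B.symm (γ t₀))) d t₀ := by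
  set L := fderiv ℝ g (B (γ t₀) - γ t₀)
  have hBγ : HasDerivAt (fun τ => B (γ τ)) (B γ') t₀ :=
    B.hasFDerivAt.comp_hasDerivAt t₀ hγ
  have hd' : d = L (B γ' - γ') :=
    hd.unique (hgd.hasFDerivAt.comp_hasDerivAt t₀ (hBγ.sub hγ))
  have hsecond (τ : ℝ) : g (γ τ - B.symm (γ t₀)) = g (B (γ τ) - γ t₀) := by
    rw [← hg, map_sub, B.apply_symm_apply]
  have h₁ : HasDerivAt (fun τ => g (B (γ t₀) - γ τ)) (L (0 - γ')) t₀ :=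
    hgd.hasFDerivAt.comp_hasDerivAt t₀ ((hasDerivAt_const t₀ _).sub hγ)
  have h₂ : HasDerivAt (fun τ => g (B (γ τ) - γ t₀)) (L (B γ' - 0)) t₀ :=
    hgd.hasFDerivAt.comp_hasDerivAt t₀ (hBγ.sub (hasDerivAt_const t₀ _))
  simp only [hsecond]
  refine (h₁.add h₂).congr_deriv ?_
  rw [hd', ← map_add]
  congr 1
  abel

end TwoPointLength

theorem stmt_16_general (K : Set ℂ)
    (B : ℂ ≃ₗ[ℝ] ℂ) (hBK : B '' K = K)
    (hdiff : ∀ x : ℂ, x ≠ 0 → DifferentiableAt ℝ (gauge K) x)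
    (γ : ℝ → ℂ) (hγ : Differentiable ℝ γ)
    (c : ℝ) (hconst : ∀ t : ℝ, gauge K (B (γ t) - γ t) = c)
    (t₀ : ℝ) (hne : B (γ t₀) ≠ γ t₀) :
    DifferentiableAt ℝ
      (fun τ : ℝ => gauge K (B (γ t₀) - γ τ) + gauge K (γ τ - B.symm (γ t₀))) t₀ ∧
    deriv (fun τ : ℝ => gauge K (B (γ t₀) - γ τ) + gauge K (γ τ - B.symm (γ t₀))) t₀ = 0 := by
  have hinv : ∀ y, gauge K (B y) = gauge K y := fun y => by
    rw [← gauge_image_linearEquiv B K y, hBK]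
  have hdisp : HasDerivAt (fun τ => gauge K (B (γ τ) - γ τ)) 0 t₀ := by
    simpa only [hconst] using hasDerivAt_const t₀ c
  have hf := hasDerivAt_comp_sub_add_comp_sub_symm B.toContinuousLinearEquiv hinv
    (hγ t₀).hasDerivAt (hdiff _ (sub_ne_zero.2 hne)) hdisp
  exact ⟨hf.differentiableAt, hf.deriv⟩

theorem stmt_16 (K : Set ℂ) (hKcomp : IsCompact K) (hKconv : Convex ℝ K)
    (h0 : (0 : ℂ) ∈ interior K)
    (B : ℂ ≃ₗ[ℝ] ℂ) (hBK : B '' K = K)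
    (hdiff : ∀ x : ℂ, x ≠ 0 → DifferentiableAt ℝ (gauge K) x)
    (γ : ℝ → ℂ) (hγ : Differentiable ℝ γ)
    (c : ℝ) (hconst : ∀ t : ℝ, gauge K (B (γ t) - γ t) = c)
    (t₀ : ℝ) (hne : B (γ t₀) ≠ γ t₀) :
    DifferentiableAt ℝ
      (fun τ : ℝ => gauge K (B (γ t₀) - γ τ) + gauge K (γ τ - B.symm (γ t₀))) t₀ ∧
    deriv (fun τ : ℝ => gauge K (B (γ t₀) - γ τ) + gauge K (γ τ - B.symm (γ t₀))) t₀ = 0 :=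
  stmt_16_general K B hBK hdiff γ hγ c hconst t₀ hne
end
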